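/- arXiv:2106.14497 — 6 statements merged into one kernel-verified Lean document; each statement's English description precedes it below -/
import Mathlib

section
/- Let Γ be a distance-regular graph with adjacency matrix A, valency k = b_0, intersection number a_1, and let t ∈ ℝ. Then the mean and variance of A in the Gibbs functional are φ_t(A) = t·k and φ_t((A − t·k·I)²) = k(1−t)(1+t+t·a_1). -/
open Matrix Filter

/-- A (bundled) distance-regular graph: a finite connected simple graph of diameter `d`
with intersection numbers `a i`, `b i`, `c i` for `0 ≤ i ≤ d`; `b 0` is the valency `k`. -/
structure DRG where
  X : Type
  fin : Fintype X
  G : SimpleGraph X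
  d : ℕ
  a : ℕ → ℕ
  b : ℕ → ℕ
  c : ℕ → ℕ
  conn : G.Connected
  dist_le : ∀ x y : X, G.dist x y ≤ d
  dist_eq : ∃ x y : X, G.dist x y = d
  bd : b d = 0
  c0 : c 0 = 0
  count_c : ∀ i ≤ d, ∀ x y : X, G.dist x y = i →
      {z : X | G.Adj y z ∧ G.dist x z = i - 1}.ncard = c i
  count_a : ∀ i ≤ d, ∀ x y : X, G.dist x y = i →
      {z : X | G.Adj y z ∧ G.dist x z = i}.ncard = a i
  count_b : ∀ i ≤ d, ∀ x y : X, G.dist x y = i →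
      {z : X | G.Adj y z ∧ G.dist x z = i + 1}.ncard = b i

attribute [instance] DRG.fin

noncomputable instance (Γ : DRG) : DecidableEq Γ.X := Classical.decEq _

noncomputable instance (Γ : DRG) : DecidableRel Γ.G.Adj := fun _ _ => Classical.dec _

namespace DRG

variable (Γ : DRG)

/-- The `i`-th distance matrix (over `ℂ`). -/
noncomputable def Amat (i : ℕ) : Matrix Γ.X Γ.X ℂ :=
  Matrix.of fun x y => if Γ.G.dist x y = i then 1 else 0

/-- The adjacency algebra `A(Γ) = span_ℂ {A_0, …, A_d}`. -/
noncomputable def adjAlg : Submodule ℂ (Matrix Γ.X Γ.X ℂ) :=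
  Submodule.span ℂ {M | ∃ i ≤ Γ.d, M = Γ.Amat i}

/-- The matrix `K_t = (t^{∂(x,y)})_{x,y}` (over `ℝ`). -/
noncomputable def Kmat (t : ℝ) : Matrix Γ.X Γ.X ℝ :=
  Matrix.of fun x y => t ^ Γ.G.dist x y

/-- `t ∈ π(Γ)`, i.e. `K_t` is positive semidefinite. -/
def piMem (t : ℝ) : Prop := (Γ.Kmat t).PosSemidef

/-- The Gibbs functional `φ_t(B) = ∑_x t^{∂(x,o)} B_{x,o}` with base vertex `o`. -/
noncomputable def gibbs (t : ℝ) (o : Γ.X) (B : Matrix Γ.X Γ.X ℂ) : ℂ :=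
  ∑ x : Γ.X, (t : ℂ) ^ Γ.G.dist x o * B x o

end DRG


section Aux

open Finset

variable (Γ : DRG)

private lemma deg_eq (z : Γ.X) :
    (Finset.univ.filter (fun x => Γ.G.dist z x = 1)).card = Γ.b 0 := by
  have h := Γ.count_b 0 (Nat.zero_le _) z z (SimpleGraph.dist_self)
  have hset : {x : Γ.X | Γ.G.Adj z x ∧ Γ.G.dist z x = 0 + 1} =
      {x : Γ.X | Γ.G.dist z x = 1} := by
    ext x
    simp [← SimpleGraph.dist_eq_one_iff_adj]
  rw [hset, Set.ncard_eq_toFinset_card', Set.toFinset_setOf] at h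
  exact h

private lemma deg_eq' (z : Γ.X) :
    (Finset.univ.filter (fun x => Γ.G.dist x z = 1)).card = Γ.b 0 := by
  rw [← deg_eq Γ z]
  congr 1
  apply Finset.filter_congr
  intro x _
  rw [SimpleGraph.dist_comm]

private lemma split_sum (N : Finset Γ.X) (o : Γ.X)
    (h2 : ∀ x ∈ N, Γ.G.dist x o ≤ 2) (f : ℕ → ℂ) :
    ∑ x ∈ N, f (Γ.G.dist x o) =
      ((N.filter fun x => Γ.G.dist x o = 0).card : ℂ) * f 0 +
      ((N.filter fun x => Γ.G.dist x o = 1).card : ℂ) * f 1 +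
      ((N.filter fun x => Γ.G.dist x o = 2).card : ℂ) * f 2 := by
  have key : ∀ x ∈ N, f (Γ.G.dist x o) =
      (if Γ.G.dist x o = 0 then f 0 else 0) + (if Γ.G.dist x o = 1 then f 1 else 0) +
        (if Γ.G.dist x o = 2 then f 2 else 0) := by
    intro x hx
    have h := h2 x hx
    interval_cases h' : Γ.G.dist x o <;> simp
  rw [Finset.sum_congr rfl key]
  rw [Finset.sum_add_distrib, Finset.sum_add_distrib, ← Finset.sum_filter,
    ← Finset.sum_filter, ← Finset.sum_filter]
  simp [Finset.sum_const, nsmul_eq_mul]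

private lemma sum_nbhd (t : ℝ) (o z : Γ.X) (hz : Γ.G.dist o z = 1) (f : ℕ → ℂ) :
    ∑ x, (if Γ.G.dist x z = 1 then f (Γ.G.dist x o) else 0) =
      f 0 + (Γ.a 1 : ℂ) * f 1 + ((Γ.b 0 : ℂ) - 1 - (Γ.a 1 : ℂ)) * f 2 := by
  classical
  set N := Finset.univ.filter (fun x => Γ.G.dist x z = 1) with hNdef
  have h2 : ∀ x ∈ N, Γ.G.dist x o ≤ 2 := by
    intro x hx
    have hx1 : Γ.G.dist x z = 1 := by simpa [hNdef] using hx
    calc Γ.G.dist x o ≤ Γ.G.dist x z + Γ.G.dist z o := Γ.conn.dist_triangle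
      _ = 2 := by rw [hx1, SimpleGraph.dist_comm, hz]
  have h1d : 1 ≤ Γ.d := hz ▸ Γ.dist_le o z
  -- cardinality of the three classes
  have hN : N.card = Γ.b 0 := deg_eq' Γ z
  have hN0 : (N.filter fun x => Γ.G.dist x o = 0) = {o} := by
    ext x
    constructor
    · intro hx
      simp only [hNdef, Finset.mem_filter] at hx
      have := (Γ.conn.dist_eq_zero_iff).mp hx.2
      simpa using this
    · intro hx
      simp only [Finset.mem_singleton] at hx
      subst hx
      refine Finset.mem_filter.mpr ⟨?_, SimpleGraph.dist_self⟩
      simp only [hNdef, Finset.mem_filter, Finset.mem_univ, true_and]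
      exact hz
  have hN1 : (N.filter fun x => Γ.G.dist x o = 1).card = Γ.a 1 := by
    have h := Γ.count_a 1 h1d o z hz
    have hset : {x : Γ.X | Γ.G.Adj z x ∧ Γ.G.dist o x = 1} =
        ((N.filter fun x => Γ.G.dist x o = 1) : Set Γ.X) := by
      ext x
      simp only [hNdef, Finset.coe_filter, Finset.mem_filter, Finset.mem_univ, true_and,
        Set.mem_setOf_eq]
      constructor
      · rintro ⟨hadj, hd⟩
        exact ⟨SimpleGraph.dist_eq_one_iff_adj.mpr hadj.symm, (SimpleGraph.dist_comm).trans hd⟩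
      · rintro ⟨hd1, hd2⟩
        exact ⟨(SimpleGraph.dist_eq_one_iff_adj.mp hd1).symm, (SimpleGraph.dist_comm).trans hd2⟩
    rw [hset, Set.ncard_coe_finset] at h
    exact h
  have hcards : ((Γ.b 0 : ℂ)) =
      1 + (Γ.a 1 : ℂ) + ((N.filter fun x => Γ.G.dist x o = 2).card : ℂ) := by
    have := split_sum Γ N o h2 (fun _ => (1 : ℂ))
    simp only [Finset.sum_const, nsmul_eq_mul, mul_one] at this
    rw [hN, hN0, hN1] at this
    simpa using this
  have hN2 : ((N.filter fun x => Γ.G.dist x o = 2).card : ℂ) =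
      (Γ.b 0 : ℂ) - 1 - (Γ.a 1 : ℂ) := by
    rw [hcards]; ring
  rw [← Finset.sum_filter, ← hNdef, split_sum Γ N o h2 f, hN0, hN1, hN2]
  simp

end Aux

/-- Mean and variance of the adjacency matrix `A = A₁` in the Gibbs functional:
`φ_t(A) = t·k` and `φ_t((A − t·k·I)²) = k(1−t)(1+t+t·a₁)`, where `k = b₀`. -/
theorem stmt1 (Γ : DRG) (t : ℝ) (o : Γ.X) :
    Γ.gibbs t o (Γ.Amat 1) = (t : ℂ) * (Γ.b 0 : ℂ) ∧
    Γ.gibbs t o ((Γ.Amat 1 - ((t : ℂ) * (Γ.b 0 : ℂ)) • (1 : Matrix Γ.X Γ.X ℂ)) ^ 2) =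
      (Γ.b 0 : ℂ) * (1 - (t : ℂ)) * (1 + (t : ℂ) + (t : ℂ) * (Γ.a 1 : ℂ)) := by
  classical
  have hdeg := deg_eq' Γ
  have hA : Γ.gibbs t o (Γ.Amat 1) = (t : ℂ) * (Γ.b 0 : ℂ) := by
    unfold DRG.gibbs
    have key : ∀ x : Γ.X, (t : ℂ) ^ Γ.G.dist x o * (Γ.Amat 1) x o
        = if Γ.G.dist x o = 1 then (t : ℂ) else 0 := by
      intro x
      simp only [DRG.Amat, Matrix.of_apply, mul_ite, mul_one, mul_zero]
      split
      · rename_i h; rw [h]; simp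
      · rfl
    rw [Finset.sum_congr rfl fun x _ => key x, ← Finset.sum_filter, Finset.sum_const,
      hdeg o, nsmul_eq_mul, mul_comm]
  refine ⟨hA, ?_⟩
  have hone : Γ.gibbs t o (1 : Matrix Γ.X Γ.X ℂ) = 1 := by
    unfold DRG.gibbs
    simp [Matrix.one_apply, SimpleGraph.dist_self]
  have hAA : Γ.gibbs t o (Γ.Amat 1 * Γ.Amat 1)
      = (Γ.b 0 : ℂ) * (1 + (t : ℂ) * (Γ.a 1 : ℂ)
          + (t : ℂ) ^ 2 * ((Γ.b 0 : ℂ) - 1 - (Γ.a 1 : ℂ))) := by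
    unfold DRG.gibbs
    have step : ∀ x : Γ.X, (t : ℂ) ^ Γ.G.dist x o * (Γ.Amat 1 * Γ.Amat 1) x o
        = ∑ z : Γ.X, (if Γ.G.dist z o = 1 then
            (if Γ.G.dist x z = 1 then (t : ℂ) ^ Γ.G.dist x o else 0) else 0) := by
      intro x
      rw [Matrix.mul_apply, Finset.mul_sum]
      refine Finset.sum_congr rfl fun z _ => ?_
      simp only [DRG.Amat, Matrix.of_apply]
      split_ifs <;> simp
    rw [Finset.sum_congr rfl fun x _ => step x, Finset.sum_comm]
    have hz : ∀ z : Γ.X,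
        (∑ x : Γ.X, if Γ.G.dist z o = 1 then
            (if Γ.G.dist x z = 1 then (t : ℂ) ^ Γ.G.dist x o else 0) else 0)
        = if Γ.G.dist z o = 1 then
            ((t : ℂ) ^ 0 + (Γ.a 1 : ℂ) * (t : ℂ) ^ 1
              + ((Γ.b 0 : ℂ) - 1 - (Γ.a 1 : ℂ)) * (t : ℂ) ^ 2) else 0 := by
      intro z
      split_ifs with h
      · exact sum_nbhd Γ t o z (SimpleGraph.dist_comm.trans h) (fun n => (t : ℂ) ^ n)
      · simp
    rw [Finset.sum_congr rfl fun z _ => hz z, ← Finset.sum_filter, Finset.sum_const,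
      hdeg o, nsmul_eq_mul]
    ring
  set s : ℂ := (t : ℂ) * (Γ.b 0 : ℂ) with hs
  have expand : (Γ.Amat 1 - s • (1 : Matrix Γ.X Γ.X ℂ)) ^ 2
      = Γ.Amat 1 * Γ.Amat 1 - (2 * s) • Γ.Amat 1 + (s * s) • (1 : Matrix Γ.X Γ.X ℂ) := by
    simp only [sq, sub_mul, mul_sub, Matrix.smul_mul, Matrix.mul_smul, smul_smul,
      mul_one, one_mul, two_mul, add_smul]
    abel
  have hlin : Γ.gibbs t o (Γ.Amat 1 * Γ.Amat 1 - (2 * s) • Γ.Amat 1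
        + (s * s) • (1 : Matrix Γ.X Γ.X ℂ))
      = Γ.gibbs t o (Γ.Amat 1 * Γ.Amat 1) - (2 * s) * Γ.gibbs t o (Γ.Amat 1)
        + (s * s) * Γ.gibbs t o (1 : Matrix Γ.X Γ.X ℂ) := by
    unfold DRG.gibbs
    rw [Finset.mul_sum, Finset.mul_sum, ← Finset.sum_sub_distrib, ← Finset.sum_add_distrib]
    refine Finset.sum_congr rfl fun x _ => ?_
    simp only [Matrix.add_apply, Matrix.sub_apply, Matrix.smul_apply, smul_eq_mul]
    ring
  rw [expand, hlin, hAA, hA, hone, hs]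
  ring
end

section
/- Let Γ be a distance-regular graph with diameter d, base vertex o, and quantum components A^+, A^−, A^∘ of the adjacency matrix. Then for every 0 ≤ i ≤ d: A^+ Φ_i = √(c_{i+1} b_i)·Φ_{i+1}, A^− Φ_i = √(c_i b_{i−1})·Φ_{i−1}, and A^∘ Φ_i = a_i·Φ_i, where the terms √(c_{d+1}b_d)Φ_{d+1} and √(c_0 b_{−1})Φ_{−1} are interpreted as the zero vector. -/
open Matrix Filter

namespace DRG

variable (Γ : DRG)

/-- `k_i`: the number of vertices at distance `i` from the base vertex. -/
noncomputable def kk (o : Γ.X) (i : ℕ) : ℕ := {x : Γ.X | Γ.G.dist o x = i}.ncard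

/-- The unit vector `Φ_i = k_i^{-1/2} A_i ô`. -/
noncomputable def Phi (o : Γ.X) (i : ℕ) : Γ.X → ℂ :=
  fun x => ((Real.sqrt (Γ.kk o i) : ℝ) : ℂ)⁻¹ * (if Γ.G.dist x o = i then 1 else 0)

end DRG

namespace DRG

variable (Γ : DRG)

/-- The quantum component `A^ε` (with `e = i_ε ∈ {1, -1, 0}`):
`(A^ε)_{x,y} = 1` iff `x ∼ y` and `∂(x,o) = ∂(y,o) + i_ε`. -/
noncomputable def Aeps (o : Γ.X) (e : ℤ) : Matrix Γ.X Γ.X ℂ :=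
  Matrix.of fun x y =>
    if Γ.G.Adj x y ∧ (Γ.G.dist x o : ℤ) = (Γ.G.dist y o : ℤ) + e then 1 else 0

end DRG

section Aux

lemma ncard_filter {X : Type} [Fintype X] (p : X → Prop) [DecidablePred p] :
    {x : X | p x}.ncard = (Finset.univ.filter p).card := by
  rw [Set.ncard_eq_toFinset_card']; simp

lemma sqrt_scalar_eq (kA kB c b : ℝ) (hkA : 0 ≤ kA) (hkB : 0 < kB) (hc : 0 ≤ c) (hb : 0 ≤ b)
    (hdc : kA * b = kB * c) :
    (Real.sqrt kA)⁻¹ * c = Real.sqrt (c * b) * (Real.sqrt kB)⁻¹ := by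
  rcases hc.eq_or_lt with h | hc'
  · rw [← h, zero_mul, Real.sqrt_zero, mul_zero, zero_mul]
  · have hb' : 0 < b := by
      rcases hb.eq_or_lt with h | h
      · exfalso; nlinarith
      · exact h
    have hkA' : 0 < kA := by nlinarith
    have l1 : (Real.sqrt kA)⁻¹ * c = Real.sqrt (kA⁻¹ * c ^ 2) := by
      rw [Real.sqrt_mul (by positivity), Real.sqrt_sq hc, Real.sqrt_inv]
    have l2 : Real.sqrt (c * b * kB⁻¹) = Real.sqrt (c * b) * (Real.sqrt kB)⁻¹ := by
      rw [Real.sqrt_mul (by positivity : (0:ℝ) ≤ c * b), Real.sqrt_inv]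
    rw [l1, ← l2]
    congr 1
    field_simp
    nlinarith

end Aux

namespace DRG

variable (Γ : DRG)

lemma kk_eq_card (o : Γ.X) (i : ℕ) :
    Γ.kk o i = (Finset.univ.filter fun x => Γ.G.dist o x = i).card := ncard_filter _

/-- Double counting: `k_j b_j = k_{j+1} c_{j+1}`. -/
lemma dc (o : Γ.X) (j : ℕ) (hj : j + 1 ≤ Γ.d) :
    Γ.kk o j * Γ.b j = Γ.kk o (j + 1) * Γ.c (j + 1) := by
  classical
  have lhs : ∑ x : Γ.X, ∑ y : Γ.X,
      (if Γ.G.Adj x y ∧ Γ.G.dist o x = j ∧ Γ.G.dist o y = j + 1 then 1 else 0 : ℕ)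
      = Γ.kk o j * Γ.b j := by
    have inner : ∀ x : Γ.X, ∑ y : Γ.X,
        (if Γ.G.Adj x y ∧ Γ.G.dist o x = j ∧ Γ.G.dist o y = j + 1 then 1 else 0 : ℕ)
        = if Γ.G.dist o x = j then Γ.b j else 0 := by
      intro x
      by_cases hx : Γ.G.dist o x = j
      · rw [if_pos hx]
        have hcount := Γ.count_b j (le_trans (Nat.le_succ j) hj) o x hx
        rw [ncard_filter] at hcount
        rw [← hcount, Finset.card_filter]
        exact Finset.sum_congr rfl fun y _ => by simp [hx]
      · rw [if_neg hx]
        exact Finset.sum_eq_zero fun y _ => by simp [hx]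
    rw [Finset.sum_congr rfl fun x _ => inner x, ← Finset.sum_filter, Finset.sum_const,
      smul_eq_mul, kk_eq_card]
  have rhs : ∑ x : Γ.X, ∑ y : Γ.X,
      (if Γ.G.Adj x y ∧ Γ.G.dist o x = j ∧ Γ.G.dist o y = j + 1 then 1 else 0 : ℕ)
      = Γ.kk o (j + 1) * Γ.c (j + 1) := by
    rw [Finset.sum_comm]
    have inner : ∀ y : Γ.X, ∑ x : Γ.X,
        (if Γ.G.Adj x y ∧ Γ.G.dist o x = j ∧ Γ.G.dist o y = j + 1 then 1 else 0 : ℕ)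
        = if Γ.G.dist o y = j + 1 then Γ.c (j + 1) else 0 := by
      intro y
      by_cases hy : Γ.G.dist o y = j + 1
      · rw [if_pos hy]
        have hcount := Γ.count_c (j + 1) hj o y hy
        rw [ncard_filter] at hcount
        simp only [Nat.add_sub_cancel] at hcount
        rw [← hcount, Finset.card_filter]
        refine Finset.sum_congr rfl fun x _ => ?_
        by_cases hadj : Γ.G.Adj y x
        · simp [hadj, hadj.symm, hy]
        · have : ¬ Γ.G.Adj x y := fun h => hadj h.symm
          simp [hadj, this]
      · rw [if_neg hy]
        exact Finset.sum_eq_zero fun x _ => by simp [hy]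
    rw [Finset.sum_congr rfl fun y _ => inner y, ← Finset.sum_filter, Finset.sum_const,
      smul_eq_mul, kk_eq_card]
  rw [← lhs, rhs]

/-- Generic computation of `(A^ε Φ_i)(x)`. -/
lemma mulVec_eps (o : Γ.X) (e : ℤ) (i : ℕ) (x : Γ.X) :
    (Γ.Aeps o e).mulVec (Γ.Phi o i) x =
      ((Real.sqrt (Γ.kk o i) : ℝ) : ℂ)⁻¹ *
        (if (Γ.G.dist x o : ℤ) = (i : ℤ) + e then
          ({z : Γ.X | Γ.G.Adj x z ∧ Γ.G.dist o z = i}.ncard : ℂ) else 0) := by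
  classical
  simp only [Matrix.mulVec, dotProduct, Aeps, Phi, Matrix.of_apply]
  by_cases hx : (Γ.G.dist x o : ℤ) = (i : ℤ) + e
  · rw [if_pos hx, ncard_filter, Finset.card_filter]
    push_cast
    rw [Finset.mul_sum]
    refine Finset.sum_congr rfl fun y _ => ?_
    by_cases hy : Γ.G.dist y o = i
    · have hd : Γ.G.dist o y = i := by rw [SimpleGraph.dist_comm]; exact hy
      simp [hy, hd, hx, mul_comm]
    · have hd : ¬ Γ.G.dist o y = i := fun h => hy (by rw [SimpleGraph.dist_comm]; exact h)
      simp [hy, hd]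
  · rw [if_neg hx, mul_zero]
    refine Finset.sum_eq_zero fun y _ => ?_
    by_cases hy : Γ.G.dist y o = i
    · have : ¬ ((Γ.G.dist x o : ℤ) = (Γ.G.dist y o : ℤ) + e) := by rw [hy]; exact hx
      simp [this]
    · simp [hy]

lemma kk_pos_of_mem (o x : Γ.X) (i : ℕ) (hx : Γ.G.dist x o = i) : 0 < Γ.kk o i := by
  rw [kk, Set.ncard_pos (Set.toFinite _)]
  exact ⟨x, show Γ.G.dist o x = i by rw [SimpleGraph.dist_comm]; exact hx⟩

end DRG

/-- Actions of the quantum components on the vectors `Φ_i`: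
`A⁺Φ_i = √(c_{i+1}b_i)·Φ_{i+1}`, `A⁻Φ_i = √(c_i b_{i−1})·Φ_{i−1}`, `A°Φ_i = a_i·Φ_i`
(with the out-of-range terms vanishing: `c₀ = 0` and `b_d = 0`). -/
theorem stmt4 (Γ : DRG) (o : Γ.X) (i : ℕ) (hi : i ≤ Γ.d) :
    (Γ.Aeps o 1).mulVec (Γ.Phi o i) =
      ((Real.sqrt ((Γ.c (i + 1) : ℝ) * (Γ.b i : ℝ)) : ℝ) : ℂ) • Γ.Phi o (i + 1) ∧
    (Γ.Aeps o (-1)).mulVec (Γ.Phi o i) =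
      ((Real.sqrt ((Γ.c i : ℝ) * (Γ.b (i - 1) : ℝ)) : ℝ) : ℂ) • Γ.Phi o (i - 1) ∧
    (Γ.Aeps o 0).mulVec (Γ.Phi o i) = (Γ.a i : ℂ) • Γ.Phi o i := by
  classical
  refine ⟨?_, ?_, ?_⟩
  · -- A⁺
    funext x
    rw [Γ.mulVec_eps o 1 i x]
    simp only [Pi.smul_apply, DRG.Phi, smul_eq_mul]
    by_cases hx : Γ.G.dist x o = i + 1
    · have hxz : (Γ.G.dist x o : ℤ) = (i : ℤ) + 1 := by exact_mod_cast hx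
      rw [if_pos hxz, if_pos hx, mul_one]
      have hd1 : i + 1 ≤ Γ.d := hx ▸ Γ.dist_le x o
      have hcount := Γ.count_c (i + 1) hd1 o x (by rw [SimpleGraph.dist_comm]; exact hx)
      simp only [Nat.add_sub_cancel] at hcount
      rw [hcount]
      have hkB : 0 < Γ.kk o (i + 1) := Γ.kk_pos_of_mem o x (i + 1) hx
      have key := sqrt_scalar_eq (Γ.kk o i) (Γ.kk o (i + 1)) (Γ.c (i + 1)) (Γ.b i)
        (Nat.cast_nonneg _) (by exact_mod_cast hkB) (Nat.cast_nonneg _) (Nat.cast_nonneg _)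
        (by exact_mod_cast Γ.dc o i hd1)
      exact_mod_cast congrArg Complex.ofReal key
    · have hxz : ¬ (Γ.G.dist x o : ℤ) = (i : ℤ) + 1 := by exact_mod_cast hx
      rw [if_neg hxz, if_neg hx, mul_zero, mul_zero, mul_zero]
  · -- A⁻
    funext x
    rw [Γ.mulVec_eps o (-1) i x]
    simp only [Pi.smul_apply, DRG.Phi, smul_eq_mul]
    rcases Nat.eq_zero_or_pos i with rfl | hi0
    · have hxz : ¬ (Γ.G.dist x o : ℤ) = ((0 : ℕ) : ℤ) + (-1) := by
        intro h; omega
      rw [if_neg hxz, mul_zero]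
      simp [Γ.c0]
    · obtain ⟨j, rfl⟩ : ∃ j, i = j + 1 := ⟨i - 1, by omega⟩
      simp only [Nat.add_sub_cancel]
      by_cases hx : Γ.G.dist x o = j
      · have hxz : (Γ.G.dist x o : ℤ) = ((j + 1 : ℕ) : ℤ) + (-1) := by
          push_cast; omega
        rw [if_pos hxz, if_pos hx, mul_one]
        have hcount := Γ.count_b j (by omega) o x (by rw [SimpleGraph.dist_comm]; exact hx)
        rw [hcount]
        have hkB : 0 < Γ.kk o j := Γ.kk_pos_of_mem o x j hx
        have key := sqrt_scalar_eq (Γ.kk o (j + 1)) (Γ.kk o j) (Γ.b j) (Γ.c (j + 1))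
          (Nat.cast_nonneg _) (by exact_mod_cast hkB) (Nat.cast_nonneg _) (Nat.cast_nonneg _)
          (by exact_mod_cast (Γ.dc o j hi).symm)
        rw [mul_comm ((Γ.b j : ℝ)) ((Γ.c (j + 1) : ℝ))] at key
        exact_mod_cast congrArg Complex.ofReal key
      · have hxz : ¬ (Γ.G.dist x o : ℤ) = ((j + 1 : ℕ) : ℤ) + (-1) := by
          push_cast; omega
        rw [if_neg hxz, if_neg hx, mul_zero, mul_zero, mul_zero]
  · -- A°
    funext x
    rw [Γ.mulVec_eps o 0 i x]
    simp only [Pi.smul_apply, DRG.Phi, smul_eq_mul]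
    by_cases hx : Γ.G.dist x o = i
    · have hxz : (Γ.G.dist x o : ℤ) = (i : ℤ) + 0 := by push_cast; omega
      rw [if_pos hxz, if_pos hx]
      have hcount := Γ.count_a i hi o x (by rw [SimpleGraph.dist_comm]; exact hx)
      rw [hcount, mul_one]
      ring
    · have hxz : ¬ (Γ.G.dist x o : ℤ) = (i : ℤ) + 0 := by push_cast; omega
      rw [if_neg hxz, if_neg hx, mul_zero, mul_zero]
end

section
/- In the net setting for distance-regular graphs with d → ∞, suppose that for every i ≥ 1 the limits ω_i = lim ω̄_i and α_i = lim ᾱ_i exist and ω_i > 0. Then for every i ≥ 0 the limit γ_i = lim γ̄_i = lim t^i √(k_i) exists as well. -/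
open Matrix Filter

section Net

variable {Λ : Type*} [Preorder Λ] [IsDirected Λ (· ≤ ·)] [Nonempty Λ]

/-- The variance `Σ_t²(A) = k(1−t)(1+t+t·a₁)` as a function of the net index. -/
noncomputable def sig2 (Γ : Λ → DRG) (t : Λ → ℝ) (l : Λ) : ℝ :=
  ((Γ l).b 0 : ℝ) * (1 - t l) * (1 + t l + t l * ((Γ l).a 1 : ℝ))

/-- `ω̄_i = c_i b_{i−1} / Σ_t²(A)`. -/
noncomputable def omegaBar (Γ : Λ → DRG) (t : Λ → ℝ) (i : ℕ) (l : Λ) : ℝ :=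
  (((Γ l).c i : ℝ) * ((Γ l).b (i - 1) : ℝ)) / sig2 Γ t l

/-- `ᾱ_i = (a_{i−1} − t·k) / Σ_t(A)`. -/
noncomputable def alphaBar (Γ : Λ → DRG) (t : Λ → ℝ) (i : ℕ) (l : Λ) : ℝ :=
  (((Γ l).a (i - 1) : ℝ) - t l * ((Γ l).b 0 : ℝ)) / Real.sqrt (sig2 Γ t l)

/-- `k_i = (b₀⋯b_{i−1})/(c₁⋯c_i)` as a real number. -/
noncomputable def kiProd (Γ : Λ → DRG) (i : ℕ) (l : Λ) : ℝ :=
  (∏ h ∈ Finset.range i, ((Γ l).b h : ℝ)) / (∏ h ∈ Finset.range i, ((Γ l).c (h + 1) : ℝ))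

/-- `γ̄_i = t^i √(k_i)`. -/
noncomputable def gammaBar (Γ : Λ → DRG) (t : Λ → ℝ) (i : ℕ) (l : Λ) : ℝ :=
  t l ^ i * Real.sqrt (kiProd Γ i l)

/-- Assumption (DR): for every `i ≥ 1` the limits `ω_i = lim ω̄_i` and `α_i = lim ᾱ_i`
exist (with prescribed values `ω i`, `αl i`) and `ω_i > 0`. -/
def AssumptionDR (Γ : Λ → DRG) (t : Λ → ℝ) (ω αl : ℕ → ℝ) : Prop :=
  ∀ i : ℕ, 1 ≤ i → 0 < ω i ∧ Tendsto (omegaBar Γ t i) atTop (nhds (ω i)) ∧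
    Tendsto (alphaBar Γ t i) atTop (nhds (αl i))

end Net

/-!
Write `s = Σ_t(A)`. Since `c₁ = 1` and `a₀ = 0`, we have `ω̄₁ = k / s²`, `ᾱ₁ = -t k / s` and
`ᾱ₂ - ᾱ₁ = a₁ / s ≥ 0`. Hence `γ̄₁ = t √k = -ᾱ₁ / √ω̄₁` converges, and the definition of `s²` reads
`ω̄₁ (1 - t²) - ᾱ₁ (1 - t) (ᾱ₂ - ᾱ₁) = 1`. As `t² ≤ γ̄₁²`, the net `t` is eventually bounded, and
each of its cluster points `τ` satisfies the limiting quadratic equation together with `α₁ τ ≤ 0`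
and `τ² ω₁ ≤ α₁²`; these conditions have at most one solution, so `t → τ`.
Finally `k = cᵢ + aᵢ + bᵢ` gives the three-term recurrence
`γ̄_{n+2} √ω̄_{n+2} = -((1 - t) ᾱ₁ + t ᾱ_{n+2}) γ̄_{n+1} - t² √ω̄_{n+1} γ̄_n`,
whose coefficients converge, and `ω_{n+2} > 0` lets us solve it for `γ̄_{n+2}` in the limit.
-/

namespace SimpleGraph

variable {V : Type*} {G : SimpleGraph V}

lemma Walk.dist_getVert_of_length_eq_dist {u v : V} (p : G.Walk u v)
    (hp : p.length = G.dist u v) {i : ℕ} (hi : i ≤ p.length) : G.dist u (p.getVert i) = i := by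
  rw [← length_eq_dist_of_subwalk hp (p.isSubwalk_take i), Walk.take_length, min_eq_left hi]

end SimpleGraph

namespace DRG

variable (Γ : DRG)

lemma exists_adj_dist_succ {i : ℕ} (hi : i < Γ.d) :
    ∃ x y z : Γ.X, Γ.G.Adj y z ∧ Γ.G.dist x y = i ∧ Γ.G.dist x z = i + 1 := by
  obtain ⟨x, w, hxw⟩ := Γ.dist_eq
  obtain ⟨p, hp⟩ := Γ.conn.exists_walk_length_eq_dist x w
  exact ⟨x, p.getVert i, p.getVert (i + 1), p.adj_getVert_succ (by omega),
    p.dist_getVert_of_length_eq_dist hp (by omega), p.dist_getVert_of_length_eq_dist hp (by omega)⟩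

lemma exists_dist_eq {i : ℕ} (hi : i ≤ Γ.d) : ∃ x y : Γ.X, Γ.G.dist x y = i := by
  rcases hi.lt_or_eq with hi | rfl
  · obtain ⟨x, y, -, -, hxy, -⟩ := Γ.exists_adj_dist_succ hi
    exact ⟨x, y, hxy⟩
  · exact Γ.dist_eq

lemma b_pos {i : ℕ} (hi : i < Γ.d) : 0 < Γ.b i := by
  obtain ⟨x, y, z, hyz, hxy, hxz⟩ := Γ.exists_adj_dist_succ hi
  rw [← Γ.count_b i hi.le x y hxy]
  exact (Set.ncard_pos (Set.toFinite _)).2 ⟨z, hyz, hxz⟩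

lemma c_succ_pos {i : ℕ} (hi : i < Γ.d) : 0 < Γ.c (i + 1) := by
  obtain ⟨x, y, z, hyz, hxy, hxz⟩ := Γ.exists_adj_dist_succ hi
  rw [← Γ.count_c (i + 1) hi x z hxz]
  exact (Set.ncard_pos (Set.toFinite _)).2 ⟨y, hyz.symm, hxy⟩

lemma a_zero : Γ.a 0 = 0 := by
  obtain ⟨x⟩ := Γ.conn.nonempty
  rw [← Γ.count_a 0 (Nat.zero_le _) x x SimpleGraph.dist_self, Set.ncard_eq_zero]
  ext z
  simp only [Set.mem_ofPred_eq, Set.mem_empty_iff_false, iff_false, not_and]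
  intro hxz
  simp [SimpleGraph.dist_eq_one_iff_adj.2 hxz]

lemma c_one (hd : 1 ≤ Γ.d) : Γ.c 1 = 1 := by
  obtain ⟨x, y, hxy⟩ := Γ.exists_dist_eq hd
  rw [← Γ.count_c 1 hd x y hxy, ← Set.ncard_singleton x]
  congr 1
  ext z
  simp only [Set.mem_ofPred_eq, Set.mem_singleton_iff, Nat.sub_self, Γ.conn.dist_eq_zero_iff]
  constructor
  · rintro ⟨-, rfl⟩
    rfl
  · rintro rfl
    exact ⟨(SimpleGraph.dist_eq_one_iff_adj.1 hxy).symm, rfl⟩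

/-- Count the neighbours of `y` by their distance `i - 1`, `i` or `i + 1` to `x`,
where `∂(x, y) = i`. -/
lemma b_zero_eq_c_add_a_add_b {i : ℕ} (hi₁ : 1 ≤ i) (hi : i ≤ Γ.d) :
    Γ.b 0 = Γ.c i + Γ.a i + Γ.b i := by
  obtain ⟨x, y, hxy⟩ := Γ.exists_dist_eq hi
  let S : ℕ → Set Γ.X := fun j => {z | Γ.G.Adj y z ∧ Γ.G.dist x z = j}
  have hdisj {j j' : ℕ} (h : j ≠ j') : Disjoint (S j) (S j') :=
    Set.disjoint_left.2 fun _ hz hz' => h (hz.2.symm.trans hz'.2)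
  have hnbr : {z | Γ.G.Adj y z ∧ Γ.G.dist y z = 0 + 1} = S (i - 1) ∪ (S i ∪ S (i + 1)) := by
    ext z
    simp only [S, Set.mem_ofPred_eq, Set.mem_union, zero_add, SimpleGraph.dist_eq_one_iff_adj]
    constructor
    · rintro ⟨hadj, -⟩
      rcases hadj.diff_dist_adj (u := x) with h | h | h <;> rw [hxy] at h <;> tauto
    · rintro (⟨hadj, -⟩ | ⟨hadj, -⟩ | ⟨hadj, -⟩) <;> exact ⟨hadj, hadj⟩
  rw [← Γ.count_b 0 (Nat.zero_le _) y y SimpleGraph.dist_self, hnbr,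
    Set.ncard_union_eq ((hdisj (by omega)).union_right (hdisj (by omega))),
    Set.ncard_union_eq (hdisj (by omega)), Γ.count_c i hi x y hxy, Γ.count_a i hi x y hxy,
    Γ.count_b i hi x y hxy, add_assoc]

end DRG

lemma eq_of_quadratic_eq_one {w a δ τ₁ τ₂ : ℝ} (hw : 0 < w) (hδ : 0 ≤ δ)
    (h₁ : w * (1 - τ₁ ^ 2) - a * (1 - τ₁) * δ = 1) (h₂ : w * (1 - τ₂ ^ 2) - a * (1 - τ₂) * δ = 1)
    (hs₁ : a * τ₁ ≤ 0) (hs₂ : a * τ₂ ≤ 0) (hb₁ : τ₁ ^ 2 * w ≤ a ^ 2) (hb₂ : τ₂ ^ 2 * w ≤ a ^ 2) :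
    τ₁ = τ₂ := by
  by_contra hne
  have hsum : w * (τ₁ + τ₂) = a * δ := by
    have h : (τ₂ - τ₁) * (w * (τ₁ + τ₂) - a * δ) = 0 := by linear_combination h₁ - h₂
    linarith [(mul_eq_zero.1 h).resolve_left (sub_ne_zero.2 (Ne.symm hne))]
  have hnonneg : 0 ≤ a * τ₁ + a * τ₂ := by
    have h : w * (a * τ₁ + a * τ₂) = a ^ 2 * δ := by linear_combination a * hsum
    exact (mul_nonneg_iff_of_pos_left hw).1 (h ▸ by positivity)
  have ha₁ : a * τ₁ = 0 := by linarith
  have ha₂ : a * τ₂ = 0 := by linarith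
  rcases eq_or_ne a 0 with rfl | ha
  · have h₁ : τ₁ ^ 2 ≤ 0 := by nlinarith
    have h₂ : τ₂ ^ 2 ≤ 0 := by nlinarith
    exact hne ((pow_eq_zero_iff two_ne_zero).1 (h₁.antisymm (sq_nonneg _)) ▸
      ((pow_eq_zero_iff two_ne_zero).1 (h₂.antisymm (sq_nonneg _))).symm)
  · exact hne ((mul_eq_zero.1 ha₁).resolve_left ha ▸ ((mul_eq_zero.1 ha₂).resolve_left ha).symm)

section Net

variable {Λ : Type*} (Γ : Λ → DRG) (t : Λ → ℝ)

lemma kiProd_zero (l : Λ) : kiProd Γ 0 l = 1 := by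
  simp [kiProd]

lemma kiProd_succ (j : ℕ) (l : Λ) :
    kiProd Γ (j + 1) l = kiProd Γ j l * ((Γ l).b j / (Γ l).c (j + 1)) := by
  rw [kiProd, kiProd, Finset.prod_range_succ, Finset.prod_range_succ, div_mul_div_comm]

lemma kiProd_nonneg (j : ℕ) (l : Λ) : 0 ≤ kiProd Γ j l := by
  unfold kiProd
  positivity

lemma omegaBar_one {l : Λ} (hl : 1 ≤ (Γ l).d) :
    omegaBar Γ t 1 l = (Γ l).b 0 / sig2 Γ t l := by
  simp [omegaBar, (Γ l).c_one hl]

lemma alphaBar_one (l : Λ) : alphaBar Γ t 1 l = -(t l * (Γ l).b 0) / √(sig2 Γ t l) := by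
  simp [alphaBar, (Γ l).a_zero]

lemma alphaBar_two_sub_alphaBar_one (l : Λ) :
    alphaBar Γ t 2 l - alphaBar Γ t 1 l = (Γ l).a 1 / √(sig2 Γ t l) := by
  rw [alphaBar_one, alphaBar, div_sub_div_same]
  ring_nf

lemma t_mul_alphaBar_one_nonpos (l : Λ) : t l * alphaBar Γ t 1 l ≤ 0 := by
  rw [alphaBar_one, mul_div_assoc', mul_neg, ← mul_assoc, ← sq]
  exact div_nonpos_of_nonpos_of_nonneg (neg_nonpos.2 (by positivity)) (Real.sqrt_nonneg _)

lemma omegaBar_one_mul_sub_alphaBar_one_mul {l : Λ} (hl : 1 ≤ (Γ l).d) (hsig : 0 < sig2 Γ t l) :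
    omegaBar Γ t 1 l * (1 - t l ^ 2)
      - alphaBar Γ t 1 l * (1 - t l) * (alphaBar Γ t 2 l - alphaBar Γ t 1 l) = 1 := by
  rw [omegaBar_one Γ t hl, alphaBar_two_sub_alphaBar_one, alphaBar_one]
  field_simp
  rw [Real.sq_sqrt hsig.le, sig2]
  ring

lemma gammaBar_one {l : Λ} (hl : 1 ≤ (Γ l).d) (hsig : 0 < sig2 Γ t l) :
    gammaBar Γ t 1 l = -alphaBar Γ t 1 l / √(omegaBar Γ t 1 l) := by
  have hk : (0 : ℝ) < (Γ l).b 0 := by exact_mod_cast (Γ l).b_pos hl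
  rw [gammaBar, kiProd_succ, kiProd_zero, (Γ l).c_one hl, Nat.cast_one, div_one,
    omegaBar_one Γ t hl, alphaBar_one, Real.sqrt_div hk.le]
  field_simp
  rw [Real.sq_sqrt hk.le]

lemma sq_le_gammaBar_one_sq {l : Λ} (hl : 1 ≤ (Γ l).d) : t l ^ 2 ≤ gammaBar Γ t 1 l ^ 2 := by
  have hk : (1 : ℝ) ≤ (Γ l).b 0 := by exact_mod_cast (Γ l).b_pos hl
  rw [gammaBar, kiProd_succ, kiProd_zero, (Γ l).c_one hl, mul_pow, Real.sq_sqrt (by positivity)]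
  simp only [one_mul, Nat.cast_one, div_one, pow_one]
  nlinarith [sq_nonneg (t l)]

lemma sqrt_kiProd_succ_mul_sqrt_omegaBar_succ (j : ℕ) {l : Λ} (hc : 0 < (Γ l).c (j + 1)) :
    √(kiProd Γ (j + 1) l) * √(omegaBar Γ t (j + 1) l)
      = √(kiProd Γ j l) * (Γ l).b j / √(sig2 Γ t l) := by
  have hc' : ((Γ l).c (j + 1) : ℝ) ≠ 0 := Nat.cast_ne_zero.2 hc.ne'
  have h : kiProd Γ (j + 1) l * omegaBar Γ t (j + 1) l
      = kiProd Γ j l * (Γ l).b j ^ 2 / sig2 Γ t l := by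
    rw [kiProd_succ, omegaBar, Nat.add_sub_cancel]
    field_simp
  rw [← Real.sqrt_mul (kiProd_nonneg Γ _ l), h,
    Real.sqrt_div (mul_nonneg (kiProd_nonneg Γ _ l) (sq_nonneg _)),
    Real.sqrt_mul (kiProd_nonneg Γ _ l), Real.sqrt_sq (Nat.cast_nonneg _)]

lemma sqrt_omegaBar_succ_mul_sqrt_kiProd (j : ℕ) {l : Λ} (hc : 0 < (Γ l).c (j + 1)) :
    √(omegaBar Γ t (j + 1) l) * √(kiProd Γ j l)
      = (Γ l).c (j + 1) * √(kiProd Γ (j + 1) l) / √(sig2 Γ t l) := by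
  have hc' : ((Γ l).c (j + 1) : ℝ) ≠ 0 := Nat.cast_ne_zero.2 hc.ne'
  have h : omegaBar Γ t (j + 1) l * kiProd Γ j l
      = (Γ l).c (j + 1) ^ 2 * kiProd Γ (j + 1) l / sig2 Γ t l := by
    rw [kiProd_succ, omegaBar, Nat.add_sub_cancel]
    field_simp
  rw [← Real.sqrt_mul' _ (kiProd_nonneg Γ _ l), h,
    Real.sqrt_div (mul_nonneg (sq_nonneg _) (kiProd_nonneg Γ _ l)),
    Real.sqrt_mul (sq_nonneg _), Real.sqrt_sq (Nat.cast_nonneg _)]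

lemma neg_alphaBar_combination {j : ℕ} {l : Λ} (hj₁ : 1 ≤ j) (hj : j ≤ (Γ l).d) :
    -((1 - t l) * alphaBar Γ t 1 l + t l * alphaBar Γ t (j + 1) l)
      = t l * ((Γ l).b j + (Γ l).c j) / √(sig2 Γ t l) := by
  have hk : ((Γ l).b 0 : ℝ) = (Γ l).c j + (Γ l).a j + (Γ l).b j := by
    exact_mod_cast (Γ l).b_zero_eq_c_add_a_add_b hj₁ hj
  rw [alphaBar_one, alphaBar, Nat.add_sub_cancel, hk]
  ring

lemma gammaBar_add_two_mul_sqrt_omegaBar (n : ℕ) {l : Λ} (hl : n + 2 ≤ (Γ l).d) :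
    gammaBar Γ t (n + 2) l * √(omegaBar Γ t (n + 2) l)
      = -((1 - t l) * alphaBar Γ t 1 l + t l * alphaBar Γ t (n + 2) l) * gammaBar Γ t (n + 1) l
        - t l ^ 2 * √(omegaBar Γ t (n + 1) l) * gammaBar Γ t n l := by
  have h₁ := sqrt_kiProd_succ_mul_sqrt_omegaBar_succ Γ t (n + 1) ((Γ l).c_succ_pos (by omega))
  have h₂ := sqrt_omegaBar_succ_mul_sqrt_kiProd Γ t n ((Γ l).c_succ_pos (by omega))
  rw [neg_alphaBar_combination Γ t (by omega) (by omega)]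
  simp only [gammaBar]
  linear_combination t l ^ (n + 2) * h₁ + t l ^ (n + 2) * h₂

end Net

lemma exists_tendsto_of_three_term_recurrence {ι : Type*} {F : Filter ι} {g p q r : ℕ → ι → ℝ}
    {P Q R : ℕ → ℝ} (hP : ∀ n, P n ≠ 0) (hp : ∀ n, Tendsto (p n) F (nhds (P n)))
    (hq : ∀ n, Tendsto (q n) F (nhds (Q n))) (hr : ∀ n, Tendsto (r n) F (nhds (R n)))
    (hrec : ∀ n, ∀ᶠ x in F, g (n + 2) x * p n x = q n x * g (n + 1) x - r n x * g n x)
    (h₀ : ∃ γ, Tendsto (g 0) F (nhds γ)) (h₁ : ∃ γ, Tendsto (g 1) F (nhds γ)) (n : ℕ) :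
    ∃ γ, Tendsto (g n) F (nhds γ) := by
  induction n using Nat.twoStepInduction with
  | zero => exact h₀
  | one => exact h₁
  | more n ih₀ ih₁ =>
    obtain ⟨γ₀, hγ₀⟩ := ih₀
    obtain ⟨γ₁, hγ₁⟩ := ih₁
    refine ⟨(Q n * γ₁ - R n * γ₀) / P n,
      ((((hq n).mul hγ₁).sub ((hr n).mul hγ₀)).div (hp n) (hP n)).congr' ?_⟩
    filter_upwards [hrec n, (hp n).eventually_ne (hP n)] with x hx hpx
    rw [Pi.div_apply, ← hx, mul_div_cancel_right₀ _ hpx]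

section Limits

variable {Λ : Type*} (Γ : Λ → DRG) (t : Λ → ℝ) {F : Filter Λ}

lemma tendsto_gammaBar_one (hsig : ∀ l, 0 < sig2 Γ t l) (hd : ∀ᶠ l in F, 1 ≤ (Γ l).d)
    {ω₁ α₁ : ℝ} (hω₁ : 0 < ω₁) (hω : Tendsto (omegaBar Γ t 1) F (nhds ω₁))
    (hα : Tendsto (alphaBar Γ t 1) F (nhds α₁)) :
    Tendsto (gammaBar Γ t 1) F (nhds (-α₁ / √ω₁)) :=
  (hα.neg.div hω.sqrt (Real.sqrt_pos.2 hω₁).ne').congr'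
    (hd.mono fun l hl => (gammaBar_one Γ t hl (hsig l)).symm)

lemma limit_constraints_of_tendsto [F.NeBot] (hsig : ∀ l, 0 < sig2 Γ t l)
    (hd : ∀ᶠ l in F, 1 ≤ (Γ l).d) {ω₁ α₁ α₂ τ : ℝ} (hω₁ : 0 < ω₁)
    (hω : Tendsto (omegaBar Γ t 1) F (nhds ω₁)) (hα₁ : Tendsto (alphaBar Γ t 1) F (nhds α₁))
    (hα₂ : Tendsto (alphaBar Γ t 2) F (nhds α₂)) (hτ : Tendsto t F (nhds τ)) :
    ω₁ * (1 - τ ^ 2) - α₁ * (1 - τ) * (α₂ - α₁) = 1 ∧ α₁ * τ ≤ 0 ∧ τ ^ 2 * ω₁ ≤ α₁ ^ 2 := by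
  refine ⟨?_, ?_, ?_⟩
  · refine tendsto_nhds_unique (f := fun _ => (1 : ℝ)) (l := F) ?_ tendsto_const_nhds
    refine ((hω.mul (tendsto_const_nhds.sub (hτ.pow 2))).sub
      ((hα₁.mul (tendsto_const_nhds.sub hτ)).mul (hα₂.sub hα₁))).congr' ?_
    exact hd.mono fun l hl => omegaBar_one_mul_sub_alphaBar_one_mul Γ t hl (hsig l)
  · rw [mul_comm]
    exact le_of_tendsto (hτ.mul hα₁) (Eventually.of_forall (t_mul_alphaBar_one_nonpos Γ t))
  · have h := le_of_tendsto_of_tendsto (hτ.pow 2)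
      ((tendsto_gammaBar_one Γ t hsig hd hω₁ hω hα₁).pow 2)
      (hd.mono fun l hl => sq_le_gammaBar_one_sq Γ t hl)
    rwa [div_pow, neg_sq, Real.sq_sqrt hω₁.le, le_div_iff₀ hω₁] at h

lemma exists_tendsto_t [Preorder Λ] [IsDirected Λ (· ≤ ·)] [Nonempty Λ]
    (hsig : ∀ l, 0 < sig2 Γ t l) (hd : ∀ᶠ l in atTop, 1 ≤ (Γ l).d) {ω₁ α₁ α₂ : ℝ}
    (hω₁ : 0 < ω₁) (hω : Tendsto (omegaBar Γ t 1) atTop (nhds ω₁))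
    (hα₁ : Tendsto (alphaBar Γ t 1) atTop (nhds α₁))
    (hα₂ : Tendsto (alphaBar Γ t 2) atTop (nhds α₂)) :
    ∃ τ, Tendsto t atTop (nhds τ) := by
  have hδ : 0 ≤ α₂ - α₁ := ge_of_tendsto' (hα₂.sub hα₁) fun l => by
    rw [alphaBar_two_sub_alphaBar_one]
    positivity
  -- `t` is eventually bounded since `t² ≤ γ̄₁²` and `γ̄₁` converges
  set ρ := |-α₁ / √ω₁| + 1
  have hbdd : ∀ᶠ l in atTop, t l ∈ Metric.closedBall 0 ρ := by
    have hγ := (tendsto_gammaBar_one Γ t hsig hd hω₁ hω hα₁).abs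
    filter_upwards [hd, hγ.eventually (eventually_lt_nhds (lt_add_one _))] with l hl hlt
    rw [mem_closedBall_zero_iff, Real.norm_eq_abs]
    exact ((sq_le_sq.1 (sq_le_gammaBar_one_sq Γ t hl)).trans hlt.le)
  have hlim {τ : ℝ} (hτ : MapClusterPt τ atTop t) :=
    have ⟨U, hU, hτU⟩ := mapClusterPt_iff_ultrafilter.1 hτ
    limit_constraints_of_tendsto Γ t hsig (hU hd) hω₁ (hω.mono_left hU) (hα₁.mono_left hU)
      (hα₂.mono_left hU) hτU
  obtain ⟨τ, -, hτ⟩ := (isCompact_closedBall 0 ρ).exists_mapClusterPt (u := t)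
    (tendsto_principal.2 hbdd)
  refine ⟨τ, (isCompact_closedBall 0 ρ).tendsto_nhds_of_unique_mapClusterPt hbdd
    fun τ' _ hτ' => ?_⟩
  obtain ⟨h₁, hs₁, hb₁⟩ := hlim hτ'
  obtain ⟨h₂, hs₂, hb₂⟩ := hlim hτ
  exact eq_of_quadratic_eq_one hω₁ hδ h₁ h₂ hs₁ hs₂ hb₁ hb₂

end Limits

theorem stmt6_general {Λ : Type*} [Preorder Λ] [IsDirected Λ (· ≤ ·)] [Nonempty Λ]
    (Γ : Λ → DRG) (t : Λ → ℝ)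
    (hvar : ∀ l : Λ, 0 < sig2 Γ t l)
    (hd : Tendsto (fun l : Λ => (Γ l).d) atTop atTop)
    (ω αl : ℕ → ℝ) (hDR : AssumptionDR Γ t ω αl) :
    ∀ i : ℕ, ∃ γ : ℝ, Tendsto (gammaBar Γ t i) atTop (nhds γ) := by
  have hd₁ : ∀ᶠ l in atTop, 1 ≤ (Γ l).d := hd.eventually_ge_atTop 1
  obtain ⟨hω₁, hω, hα₁⟩ := hDR 1 le_rfl
  obtain ⟨τ, hτ⟩ := exists_tendsto_t Γ t hvar hd₁ hω₁ hω hα₁ (hDR 2 one_le_two).2.2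
  refine exists_tendsto_of_three_term_recurrence
    (p := fun n l => √(omegaBar Γ t (n + 2) l))
    (q := fun n l => -((1 - t l) * alphaBar Γ t 1 l + t l * alphaBar Γ t (n + 2) l))
    (r := fun n l => t l ^ 2 * √(omegaBar Γ t (n + 1) l))
    (fun n => (Real.sqrt_pos.2 (hDR (n + 2) (by omega)).1).ne')
    (fun n => (hDR (n + 2) (by omega)).2.1.sqrt)
    (fun n =>
      (((tendsto_const_nhds.sub hτ).mul hα₁).add (hτ.mul (hDR (n + 2) (by omega)).2.2)).neg)
    (fun n => (hτ.pow 2).mul (hDR (n + 1) (by omega)).2.1.sqrt)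
    (fun n => (hd.eventually_ge_atTop (n + 2)).mono fun l hl =>
      gammaBar_add_two_mul_sqrt_omegaBar Γ t n hl)
    ⟨1, tendsto_const_nhds.congr fun l => by simp [gammaBar, kiProd_zero]⟩
    ⟨_, tendsto_gammaBar_one Γ t hvar hd₁ hω₁ hω hα₁⟩

/-- If the limits `ω_i > 0` and `α_i` exist for all `i ≥ 1`, then the limits
`γ_i = lim t^i √(k_i)` exist as well. -/
theorem stmt6 {Λ : Type*} [Preorder Λ] [IsDirected Λ (· ≤ ·)] [Nonempty Λ] [Infinite Λ]
    (Γ : Λ → DRG) (t : Λ → ℝ)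
    (hpi : ∀ l : Λ, (Γ l).piMem (t l))
    (hvar : ∀ l : Λ, 0 < sig2 Γ t l)
    (hd : Tendsto (fun l : Λ => (Γ l).d) atTop atTop)
    (ω αl : ℕ → ℝ) (hDR : AssumptionDR Γ t ω αl) :
    ∀ i : ℕ, ∃ γ : ℝ, Tendsto (gammaBar Γ t i) atTop (nhds γ) :=
  stmt6_general Γ t hvar hd ω αl hDR
end

section
/- In the net setting for distance-regular graphs with d → ∞ and Assumption (DR), suppose that k → ∞ along the net. Then the limits γ_i = lim t^i √(k_i) exist for all i ≥ 0; moreover, for every i ≥ 1: a_i/√k → α_{i+1}/√(ω_1) + γ_1, b_i/k → 1, and c_i → ω_i/ω_1. -/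
/-! With `c₁ = 1` and `a₀ = 0`, the case `i = 1` of (DR) says `k/Σ² → ω₁` and
`t√k → -α₁/√ω₁ =: γ₁`. Since `a_i/√k = ᾱ_{i+1}·Σ/√k + t√k`, every `a_i/√k` converges, so
`a_i = o(k)`. Induct on `i`: if `b_i/k → 1`, then `c_{i+1} = ω̄_{i+1}·(Σ²/k)·(k/b_i) → ω_{i+1}/ω₁`,
so `c_{i+1} = o(k)` and `b_{i+1}/k = 1 - (c_{i+1} + a_{i+1})/k → 1`. Finally
`γ̄_i = ∏_{h<i} t√(b_h/c_{h+1})`, and each factor `t√k·√((b_h/k)/c_{h+1})` tends to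
`γ₁√(ω₁/ω_{h+1})`. -/

open Matrix Filter

namespace SimpleGraph

variable {V : Type*} {G : SimpleGraph V}

lemma Connected.exists_dist_eq_of_le (hG : G.Connected) {x y : V} {i : ℕ}
    (hi : i ≤ G.dist x y) : ∃ z, G.dist z y = i := by
  obtain ⟨p, hp⟩ := hG.exists_walk_length_eq_dist x y
  refine ⟨p.getVert (G.dist x y - i), le_antisymm ?_ ?_⟩
  · have hzy := dist_le (p.drop (G.dist x y - i))
    rw [Walk.drop_length, hp] at hzy
    omega
  · have hxz := dist_le (p.take (G.dist x y - i))
    have := hG.dist_triangle (u := x) (v := p.getVert (G.dist x y - i)) (w := y)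
    rw [Walk.take_length] at hxz
    omega

lemma ncard_neighborSet_eq_of_dist_eq_succ [Finite V] {x y : V} {m : ℕ}
    (h : G.dist x y = m + 1) :
    (G.neighborSet y).ncard = {z | G.Adj y z ∧ G.dist x z = m}.ncard +
      {z | G.Adj y z ∧ G.dist x z = m + 1}.ncard + {z | G.Adj y z ∧ G.dist x z = m + 2}.ncard := by
  have hsplit : G.neighborSet y = {z | G.Adj y z ∧ G.dist x z = m} ∪
      {z | G.Adj y z ∧ G.dist x z = m + 1} ∪ {z | G.Adj y z ∧ G.dist x z = m + 2} := by
    ext z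
    simp only [mem_neighborSet, Set.mem_union, Set.mem_ofPred_eq]
    constructor
    · intro hyz
      simp only [hyz, true_and]
      have := hyz.diff_dist_adj (u := x)
      omega
    · rintro ((⟨hyz, -⟩ | ⟨hyz, -⟩) | ⟨hyz, -⟩) <;> exact hyz
  rw [hsplit, Set.ncard_union_eq, Set.ncard_union_eq] <;>
    simp only [Set.disjoint_left, Set.mem_union, Set.mem_ofPred_eq] <;> omega

end SimpleGraph

namespace DRG

variable (Γ : DRG)

lemma ncard_neighborSet (y : Γ.X) : (Γ.G.neighborSet y).ncard = Γ.b 0 := by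
  rw [← Γ.count_b 0 (Nat.zero_le _) y y SimpleGraph.dist_self]
  simp [SimpleGraph.neighborSet]

lemma c_add_a_add_b {i : ℕ} (hi : i ≤ Γ.d) : Γ.c i + Γ.a i + Γ.b i = Γ.b 0 := by
  rcases i with _ | m
  · simp [Γ.c0, Γ.a_zero]
  obtain ⟨x, y, hxy⟩ := Γ.exists_dist_eq hi
  rw [← Γ.ncard_neighborSet y, Γ.G.ncard_neighborSet_eq_of_dist_eq_succ hxy,
    ← Γ.count_c _ hi x y hxy, ← Γ.count_a _ hi x y hxy, ← Γ.count_b _ hi x y hxy]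
  rfl

end DRG

open Topology

lemma alphaBar_succ_mul_sqrt_sig2_div {Λ : Type*} {Γ : Λ → DRG} {t : Λ → ℝ} {l : Λ}
    (hvar : 0 < sig2 Γ t l) (i : ℕ) :
    alphaBar Γ t (i + 1) l * √(sig2 Γ t l / (Γ l).b 0) =
      (Γ l).a i / √((Γ l).b 0) - t l * √((Γ l).b 0) := by
  have hS : √(sig2 Γ t l) ≠ 0 := (Real.sqrt_pos.mpr hvar).ne'
  rw [alphaBar, Real.sqrt_div hvar.le, Nat.add_sub_cancel, div_mul_div_cancel₀ hS, sub_div,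
    mul_div_assoc, Real.div_sqrt]

section Limits

variable {Λ : Type*} [Preorder Λ] {Γ : Λ → DRG} {t : Λ → ℝ} {ω αl : ℕ → ℝ}

lemma tendsto_valency_div_sig2 (hd : Tendsto (fun l => (Γ l).d) atTop atTop)
    (hDR : AssumptionDR Γ t ω αl) :
    Tendsto (fun l => ((Γ l).b 0 : ℝ) / sig2 Γ t l) atTop (𝓝 (ω 1)) := by
  refine (hDR 1 le_rfl).2.1.congr' ?_
  filter_upwards [hd.eventually_ge_atTop 1] with l hl
  simp [omegaBar, (Γ l).c_one hl]

lemma tendsto_sqrt_sig2_div_valency (hd : Tendsto (fun l => (Γ l).d) atTop atTop)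
    (hDR : AssumptionDR Γ t ω αl) :
    Tendsto (fun l => √(sig2 Γ t l / (Γ l).b 0)) atTop (𝓝 (√(ω 1))⁻¹) := by
  have h := ((tendsto_valency_div_sig2 hd hDR).inv₀ (hDR 1 le_rfl).1.ne').sqrt
  simpa only [inv_div, Real.sqrt_inv] using h

lemma tendsto_mul_sqrt_valency (hvar : ∀ l, 0 < sig2 Γ t l)
    (hd : Tendsto (fun l => (Γ l).d) atTop atTop) (hDR : AssumptionDR Γ t ω αl) :
    Tendsto (fun l => t l * √((Γ l).b 0)) atTop (𝓝 (-αl 1 / √(ω 1))) := by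
  rw [neg_div, div_eq_mul_inv]
  refine ((hDR 1 le_rfl).2.2.mul (tendsto_sqrt_sig2_div_valency hd hDR)).neg.congr fun l => ?_
  rw [alphaBar_succ_mul_sqrt_sig2_div (hvar l) 0, (Γ l).a_zero]
  simp

lemma tendsto_a_div_sqrt_valency (hvar : ∀ l, 0 < sig2 Γ t l)
    (hd : Tendsto (fun l => (Γ l).d) atTop atTop) (hDR : AssumptionDR Γ t ω αl) (i : ℕ) :
    Tendsto (fun l => ((Γ l).a i : ℝ) / √((Γ l).b 0)) atTop
      (𝓝 (αl (i + 1) / √(ω 1) + -αl 1 / √(ω 1))) := by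
  have h := ((hDR (i + 1) i.succ_pos).2.2.mul (tendsto_sqrt_sig2_div_valency hd hDR)).add
    (tendsto_mul_sqrt_valency hvar hd hDR)
  refine h.congr fun l => ?_
  rw [alphaBar_succ_mul_sqrt_sig2_div (hvar l)]
  ring

lemma tendsto_c_succ_of_tendsto_b_div_valency (hvar : ∀ l, 0 < sig2 Γ t l) (hd : Tendsto (fun l => (Γ l).d) atTop atTop)
    (hDR : AssumptionDR Γ t ω αl) {n : ℕ}
    (hb : Tendsto (fun l => ((Γ l).b n : ℝ) / (Γ l).b 0) atTop (𝓝 1)) :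
    Tendsto (fun l => ((Γ l).c (n + 1) : ℝ)) atTop (𝓝 (ω (n + 1) / ω 1)) := by
  have hS := (tendsto_valency_div_sig2 hd hDR).inv₀ (hDR 1 le_rfl).1.ne'
  have h := ((hDR (n + 1) n.succ_pos).2.1.mul hS).mul (hb.inv₀ one_ne_zero)
  rw [inv_one, mul_one, ← div_eq_mul_inv] at h
  refine h.congr' ?_
  filter_upwards [hb.eventually_ne one_ne_zero] with l hbk
  obtain ⟨hbn, hk0⟩ := div_ne_zero_iff.mp hbk
  simp only [omegaBar, Nat.add_sub_cancel, inv_div]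
  field_simp [hbn, hk0, (hvar l).ne']

lemma tendsto_b_div_valency (hvar : ∀ l, 0 < sig2 Γ t l)
    (hd : Tendsto (fun l => (Γ l).d) atTop atTop) (hDR : AssumptionDR Γ t ω αl)
    (hk : Tendsto (fun l => ((Γ l).b 0 : ℝ)) atTop atTop) (n : ℕ) :
    Tendsto (fun l => ((Γ l).b n : ℝ) / (Γ l).b 0) atTop (𝓝 1) := by
  induction n with
  | zero =>
    refine tendsto_const_nhds.congr' ?_
    filter_upwards [hk.eventually_gt_atTop 0] with l hl
    exact (div_self hl.ne').symm
  | succ n ih =>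
    have hc := (tendsto_c_succ_of_tendsto_b_div_valency hvar hd hDR ih).div_atTop hk
    have ha : Tendsto (fun l => ((Γ l).a (n + 1) : ℝ) / (Γ l).b 0) atTop (𝓝 0) := by
      refine ((tendsto_a_div_sqrt_valency hvar hd hDR (n + 1)).div_atTop
        (Real.tendsto_sqrt_atTop.comp hk)).congr fun l => ?_
      simp only [Function.comp_apply, div_div, Real.mul_self_sqrt (Nat.cast_nonneg _)]
    have h := (tendsto_const_nhds (x := (1 : ℝ))).sub hc |>.sub ha
    rw [sub_zero, sub_zero] at h
    refine h.congr' ?_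
    filter_upwards [hk.eventually_gt_atTop 0, hd.eventually_ge_atTop (n + 1)] with l hl hdl
    have hsum : ((Γ l).c (n + 1) : ℝ) + (Γ l).a (n + 1) + (Γ l).b (n + 1) = (Γ l).b 0 := by
      exact_mod_cast (Γ l).c_add_a_add_b hdl
    field_simp
    linarith

lemma tendsto_mul_sqrt_b_div_c (hvar : ∀ l, 0 < sig2 Γ t l)
    (hd : Tendsto (fun l => (Γ l).d) atTop atTop) (hDR : AssumptionDR Γ t ω αl)
    (hk : Tendsto (fun l => ((Γ l).b 0 : ℝ)) atTop atTop) (n : ℕ) :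
    Tendsto (fun l => t l * √((Γ l).b n / (Γ l).c (n + 1))) atTop
      (𝓝 (-αl 1 / √(ω 1) * √(ω 1 / ω (n + 1)))) := by
  have hb := tendsto_b_div_valency hvar hd hDR hk n
  have hc := tendsto_c_succ_of_tendsto_b_div_valency hvar hd hDR hb
  have hω : ω (n + 1) / ω 1 ≠ 0 := (div_pos (hDR (n + 1) n.succ_pos).1 (hDR 1 le_rfl).1).ne'
  have h := (tendsto_mul_sqrt_valency hvar hd hDR).mul ((hb.div hc hω).sqrt)
  rw [one_div_div] at h
  refine h.congr' ?_
  filter_upwards [hk.eventually_gt_atTop 0] with l hl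
  rw [mul_assoc, ← Real.sqrt_mul hl.le, Pi.div_apply, mul_div_assoc', mul_div_cancel₀ _ hl.ne']

end Limits

lemma gammaBar_eq_prod {Λ : Type*} (Γ : Λ → DRG) (t : Λ → ℝ) (i : ℕ) :
    gammaBar Γ t i = fun l => ∏ h ∈ Finset.range i, t l * √((Γ l).b h / (Γ l).c (h + 1)) := by
  funext l
  rw [gammaBar, kiProd, ← Finset.prod_div_distrib,
    Real.sqrt_prod _ fun _ _ => by positivity, Finset.prod_mul_distrib, Finset.prod_const,
    Finset.card_range]

theorem stmt10_general {Λ : Type*} [Preorder Λ]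
    (Γ : Λ → DRG) (t : Λ → ℝ)
    (hvar : ∀ l : Λ, 0 < sig2 Γ t l)
    (hd : Tendsto (fun l : Λ => (Γ l).d) atTop atTop)
    (ω αl : ℕ → ℝ) (hDR : AssumptionDR Γ t ω αl)
    (hk : Tendsto (fun l : Λ => ((Γ l).b 0 : ℝ)) atTop atTop) :
    ∃ γ : ℕ → ℝ, (∀ i : ℕ, Tendsto (gammaBar Γ t i) atTop (nhds (γ i))) ∧
      ∀ i : ℕ, 1 ≤ i →
        Tendsto (fun l : Λ => ((Γ l).a i : ℝ) / Real.sqrt ((Γ l).b 0)) atTop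
          (nhds (αl (i + 1) / Real.sqrt (ω 1) + γ 1)) ∧
        Tendsto (fun l : Λ => ((Γ l).b i : ℝ) / ((Γ l).b 0 : ℝ)) atTop (nhds 1) ∧
        Tendsto (fun l : Λ => ((Γ l).c i : ℝ)) atTop (nhds (ω i / ω 1)) := by
  set γ : ℕ → ℝ := fun i => ∏ h ∈ Finset.range i, -αl 1 / √(ω 1) * √(ω 1 / ω (h + 1))
  have hγ₁ : γ 1 = -αl 1 / √(ω 1) := by simp [γ, div_self (hDR 1 le_rfl).1.ne']
  refine ⟨γ, fun i => ?_, fun i hi => ⟨?_, tendsto_b_div_valency hvar hd hDR hk i, ?_⟩⟩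
  · rw [gammaBar_eq_prod]
    exact tendsto_finsetProd _ fun n _ => tendsto_mul_sqrt_b_div_c hvar hd hDR hk n
  · exact hγ₁ ▸ tendsto_a_div_sqrt_valency hvar hd hDR i
  · obtain ⟨n, rfl⟩ := Nat.exists_eq_add_of_le' hi
    exact tendsto_c_succ_of_tendsto_b_div_valency hvar hd hDR (tendsto_b_div_valency hvar hd hDR hk n)

/-- Under Assumption (DR), if `k → ∞`, then the limits `γ_i` exist, and moreover
for every `i ≥ 1`: `a_i/√k → α_{i+1}/√ω₁ + γ₁`, `b_i/k → 1`, and `c_i → ω_i/ω₁`. -/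
theorem stmt10 {Λ : Type*} [Preorder Λ] [IsDirected Λ (· ≤ ·)] [Nonempty Λ] [Infinite Λ]
    (Γ : Λ → DRG) (t : Λ → ℝ)
    (hpi : ∀ l : Λ, (Γ l).piMem (t l))
    (hvar : ∀ l : Λ, 0 < sig2 Γ t l)
    (hd : Tendsto (fun l : Λ => (Γ l).d) atTop atTop)
    (ω αl : ℕ → ℝ) (hDR : AssumptionDR Γ t ω αl)
    (hk : Tendsto (fun l : Λ => ((Γ l).b 0 : ℝ)) atTop atTop) :
    ∃ γ : ℕ → ℝ, (∀ i : ℕ, Tendsto (gammaBar Γ t i) atTop (nhds (γ i))) ∧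
      ∀ i : ℕ, 1 ≤ i →
        Tendsto (fun l : Λ => ((Γ l).a i : ℝ) / Real.sqrt ((Γ l).b 0)) atTop
          (nhds (αl (i + 1) / Real.sqrt (ω 1) + γ 1)) ∧
        Tendsto (fun l : Λ => ((Γ l).b i : ℝ) / ((Γ l).b 0 : ℝ)) atTop (nhds 1) ∧
        Tendsto (fun l : Λ => ((Γ l).c i : ℝ)) atTop (nhds (ω i / ω 1)) :=
  stmt10_general Γ t hvar hd ω αl hDR hk
end

section
/- In the net setting for distance-regular graphs with d → ∞ and Assumption (DR), suppose additionally that each Γ_λ has classical parameters (d, q, α, β) with d ≥ 3 and q ∈ ℤ, |q| ≥ 2. Then limsup |q| < ∞; in particular, the net λ ↦ q(λ) eventually takes only finitely many values. -/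
open Matrix Filter

/-- The Gaussian binomial `[i]_q = 1 + q + ⋯ + q^{i-1}`. -/
noncomputable def gaussOne (q : ℝ) (i : ℕ) : ℝ := ∑ h ∈ Finset.range i, q ^ h

/-- `Γ` has classical parameters `(d, q, α, β)`. -/
def DRG.HasClassical (Γ : DRG) (q α β : ℝ) : Prop :=
  (∀ i ≤ Γ.d, (Γ.b i : ℝ) = (gaussOne q Γ.d - gaussOne q i) * (β - α * gaussOne q i)) ∧
  (∀ i ≤ Γ.d, (Γ.c i : ℝ) = gaussOne q i * (1 + α * gaussOne q (i - 1)))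

lemma polyA (x : ℝ) (hx : 2 ≤ x) : (1+x)*((1+x+x^2)*x^2) ≤ 4*x^5 := by nlinarith [sq_nonneg x, sq_nonneg (x-2), sq_nonneg (x*(x-2)), sq_nonneg (x^2-2)]
lemma polyB (x : ℝ) (hx : 2 ≤ x) : x^2/4 ≤ x^2 - (1+x) := by nlinarith
lemma polyC (x : ℝ) (hx : 2 ≤ x) : ((1+x+x^2)*(x*(1+x)))*(x-1) ≤ 2*x^5 := by nlinarith [sq_nonneg x, sq_nonneg (x-2), sq_nonneg (x*(x-2)), sq_nonneg (x^2-2)]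
lemma polyD (x : ℝ) (hx : 2 ≤ x) : x^3/8 ≤ x^3 - (1+x+x^2) := by nlinarith [sq_nonneg (x-2), mul_nonneg (mul_nonneg (by linarith : (0:ℝ) ≤ x-2) (by linarith : (0:ℝ) ≤ x)) (by linarith : (0:ℝ) ≤ x)]
lemma polyE (x : ℝ) (hx : 2 ≤ x) : x^2/4 ≤ (x-1)^2 := by nlinarith
lemma polyF (x : ℝ) (hx : 2 ≤ x) : 32 ≤ x^5 := by nlinarith [sq_nonneg x, sq_nonneg (x-2), mul_nonneg (mul_nonneg (by linarith : (0:ℝ) ≤ x-2) (by linarith : (0:ℝ) ≤ x)) (sq_nonneg x), mul_nonneg (by linarith : (0:ℝ) ≤ x-2) (sq_nonneg x)]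

lemma finalChain (Q B M m1 m2 m3 : ℝ) (hq : 2 ≤ Q) (hB : 0 < B) (hM : 0 ≤ M)
    (hm1n : 0 ≤ m1) (hm2n : 0 ≤ m2) (hm3n : 0 ≤ m3)
    (h1 : (Q-1)*m1 ≤ 3*M*B) (h2 : (Q^2-(1+Q))*m2 ≤ 3*M*B)
    (h3 : (Q^3-(1+Q+Q^2))*m3 ≤ 3*M*B)
    (h4 : B*(Q^4*(Q-1)) ≤ m1*((1+Q)*((1+Q+Q^2)*Q^2)) + m2*((1+Q+Q^2)*(Q*(1+Q))) + m3*((1+Q)*Q)) :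
    Q ≤ 108*M := by
  have hQ0 : (0:ℝ) < Q := by linarith
  have h2Q : (0:ℝ) ≤ Q - 2 := by linarith
  have hQm1 : (0:ℝ) ≤ Q - 1 := by linarith
  have hQ5 : (32:ℝ) ≤ Q^5 := polyF Q hq
  have hMB : 0 ≤ M * B := mul_nonneg hM hB.le
  have hQsq : (0:ℝ) ≤ 1 + Q + Q^2 := by linarith [sq_nonneg Q]
  have T1 : ((Q-1)*m1) * ((1+Q)*((1+Q+Q^2)*Q^2)) ≤ (3*M*B) * (4*Q^5) :=
    mul_le_mul h1 (polyA Q hq)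
      (mul_nonneg (by linarith) (mul_nonneg hQsq (pow_nonneg hQ0.le 2)))
      (mul_nonneg (mul_nonneg (by norm_num) hM) hB.le)
  have hA2 : m2*Q^2 ≤ 12*(M*B) := by
    linarith [mul_le_mul_of_nonneg_left (polyB Q hq) hm2n, h2]
  have T2 : m2*((((1+Q+Q^2)*(Q*(1+Q))))*(Q-1)) ≤ 24*(M*B)*Q^3 := by
    linarith [mul_le_mul_of_nonneg_left (polyC Q hq) hm2n,
      mul_le_mul_of_nonneg_left hA2 (pow_nonneg hQ0.le 3)]
  have hA3 : m3*Q^3 ≤ 24*(M*B) := by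
    linarith [mul_le_mul_of_nonneg_left (polyD Q hq) hm3n, h3]
  have T3 : m3*(((1+Q)*Q)*(Q-1)) ≤ 24*(M*B) := by
    nlinarith [hA3, mul_nonneg hm3n hQ0.le, mul_nonneg (mul_nonneg hm3n hQ0.le) hQ0.le]
  have H : (B*(Q^4*(Q-1)))*(Q-1) ≤
      (m1 * ((1 + Q) * ((1 + Q + Q^2) * Q^2)) + m2 * ((1 + Q + Q^2) * (Q * (1 + Q)))
      + m3 * ((1 + Q) * Q))*(Q-1) := mul_le_mul_of_nonneg_right h4 hQm1
  have H2 : B*Q^4*(Q-1)^2 ≤ 12*(M*B)*Q^5 + 24*(M*B)*Q^3 + 24*(M*B) := by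
    linarith [H, T1, T2, T3]
  have hq52 : (0:ℝ) ≤ Q^5 - 2*Q^3 := by
    nlinarith [mul_nonneg (pow_nonneg hQ0.le 3) (show (0:ℝ) ≤ Q^2 - 2 by nlinarith)]
  have H3 : B*Q^4*(Q-1)^2 ≤ 27*(M*B)*Q^5 := by
    linarith [H2, mul_nonneg hMB hq52, mul_nonneg hMB (sub_nonneg.mpr hQ5)]
  have H4 : (B*Q^5)*(Q/4) ≤ (B*Q^5)*(27*M) := by
    linarith [H3, mul_le_mul_of_nonneg_left (polyE Q hq)
      (mul_nonneg hB.le (pow_nonneg hQ0.le 4))]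
  have hfin := le_of_mul_le_mul_left H4 (mul_pos hB (pow_pos hQ0 5))
  linarith


lemma gauss0 (q : ℝ) : gaussOne q 0 = 0 := by simp [gaussOne]
lemma gauss1 (q : ℝ) : gaussOne q 1 = 1 := by simp [gaussOne]
lemma gauss2 (q : ℝ) : gaussOne q 2 = 1 + q := by simp [gaussOne, Finset.sum_range_succ]
lemma gauss3 (q : ℝ) : gaussOne q 3 = 1 + q + q^2 := by
  simp [gaussOne, Finset.sum_range_succ]
lemma gauss4 (q : ℝ) : gaussOne q 4 = 1 + q + q^2 + q^3 := by
  simp [gaussOne, Finset.sum_range_succ]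
lemma gauss_mul (q : ℝ) (n : ℕ) : gaussOne q n * (q - 1) = q ^ n - 1 := geom_sum_mul q n

lemma abs_tri3 (a b c : ℝ) : |a - b + c| ≤ |a| + |b| + |c| := by
  calc |a - b + c| ≤ |a - b| + |c| := abs_add_le _ _
    _ ≤ |a| + |b| + |c| := by linarith [abs_sub a b]

lemma keyIneq (qr α β M : ℝ) (d : ℕ) (hd : 5 ≤ d) (hq : 2 ≤ |qr|)
    (hb0 : 0 < gaussOne qr d * β)
    (hcb : ∀ j : ℕ, j = 1 ∨ j = 2 ∨ j = 3 →
      0 ≤ gaussOne qr (j+1) * (gaussOne qr d - gaussOne qr j) *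
          ((1 + α * gaussOne qr j) * (β - α * gaussOne qr j)) ∧
      gaussOne qr (j+1) * (gaussOne qr d - gaussOne qr j) *
          ((1 + α * gaussOne qr j) * (β - α * gaussOne qr j)) ≤ M * (gaussOne qr d * β)) :
    |qr| ≤ 108 * M := by
  set Q := |qr| with hQdef
  have hQ0 : 0 < Q := lt_of_lt_of_le two_pos hq
  have hQ1 : 1 ≤ Q := by linarith
  have hβ : β ≠ 0 := by rintro rfl; simp at hb0
  set B := |β| with hBdef
  have hB : 0 < B := abs_pos.mpr hβ
  have hw0 : 0 < |qr - 1| := by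
    have := abs_sub_abs_le_abs_sub qr 1
    simp only [abs_one] at this; linarith
  have hQd1 : (1:ℝ) ≤ Q ^ d := one_le_pow₀ hQ1
  have hM : 0 ≤ M := by
    have h1 := hcb 1 (Or.inl rfl)
    nlinarith [h1.1, h1.2, hb0]
  have hgdB : M * (gaussOne qr d * β) = M * (|gaussOne qr d| * B) := by
    rw [hBdef, ← abs_mul, abs_of_pos hb0]
  -- gap estimates
  have hgap : ∀ j : ℕ, j ≤ 3 →
      |gaussOne qr d| ≤ 3 * |gaussOne qr d - gaussOne qr j| ∧
      0 < |gaussOne qr d - gaussOne qr j| := by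
    intro j hj
    have e1 : gaussOne qr d * (qr - 1) = qr ^ d - 1 := gauss_mul qr d
    have e2 : (gaussOne qr d - gaussOne qr j) * (qr - 1) = qr ^ d - qr ^ j := by
      rw [sub_mul, gauss_mul, gauss_mul]; ring
    have hQj : Q ^ j ≤ Q ^ 3 := pow_le_pow_right₀ hQ1 hj
    have h5d : Q ^ 5 ≤ Q ^ d := pow_le_pow_right₀ hQ1 hd
    have hQ24 : (4:ℝ) ≤ Q^2 := by nlinarith
    have h45 : 4 * Q ^ 3 ≤ Q ^ 5 := by
      nlinarith [mul_le_mul_of_nonneg_left hQ24 (pow_nonneg hQ0.le 3)]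
    have hQjd : 4 * Q ^ j ≤ Q ^ d := by linarith
    have hlow : (3/4) * Q ^ d ≤ |qr ^ d - qr ^ j| := by
      have h1 : |qr ^ d| - |qr ^ j| ≤ |qr ^ d - qr ^ j| := abs_sub_abs_le_abs_sub _ _
      rw [abs_pow, abs_pow, ← hQdef] at h1
      linarith
    have hup : |qr ^ d - 1| ≤ 2 * Q ^ d := by
      have h1 : |qr ^ d - 1| ≤ |qr ^ d| + |(1:ℝ)| := abs_sub _ _
      rw [abs_pow, ← hQdef, abs_one] at h1
      linarith
    have hpos : 0 < |gaussOne qr d - gaussOne qr j| := by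
      by_contra h
      push_neg at h
      have h0 : |gaussOne qr d - gaussOne qr j| = 0 :=
        le_antisymm h (abs_nonneg _)
      rw [← e2, abs_mul, h0, zero_mul] at hlow
      nlinarith
    refine ⟨?_, hpos⟩
    have key : |gaussOne qr d| * |qr - 1| ≤
        (3 * |gaussOne qr d - gaussOne qr j|) * |qr - 1| := by
      rw [← abs_mul, e1]
      calc |qr ^ d - 1| ≤ 2 * Q ^ d := hup
        _ ≤ 3 * ((3/4) * Q ^ d) := by linarith
        _ ≤ 3 * |qr ^ d - qr ^ j| := by linarith
        _ = 3 * (|gaussOne qr d - gaussOne qr j| * |qr - 1|) := by rw [← abs_mul, e2]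
        _ = 3 * |gaussOne qr d - gaussOne qr j| * |qr - 1| := by ring
    exact le_of_mul_le_mul_right key hw0
  -- bounds on |g(j+1)| * |P j|
  have hPb : ∀ j : ℕ, j = 1 ∨ j = 2 ∨ j = 3 →
      |gaussOne qr (j+1)| * |(1 + α * gaussOne qr j) * (β - α * gaussOne qr j)| ≤
        3 * M * B := by
    intro j hj
    obtain ⟨hnn, hle⟩ := hcb j hj
    have hj3 : j ≤ 3 := by rcases hj with rfl | rfl | rfl <;> norm_num
    obtain ⟨hgd3, hgdpos⟩ := hgap j hj3
    have habs : |gaussOne qr (j+1)| * |gaussOne qr d - gaussOne qr j| *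
        |(1 + α * gaussOne qr j) * (β - α * gaussOne qr j)| ≤ M * (|gaussOne qr d| * B) := by
      rw [← abs_mul, ← abs_mul]
      rw [abs_of_nonneg hnn] at *
      rw [← hgdB]; exact hle
    have h2 : |gaussOne qr (j+1)| * |gaussOne qr d - gaussOne qr j| *
        |(1 + α * gaussOne qr j) * (β - α * gaussOne qr j)| ≤
        M * (3 * |gaussOne qr d - gaussOne qr j| * B) := by
      calc _ ≤ M * (|gaussOne qr d| * B) := habs
        _ ≤ M * (3 * |gaussOne qr d - gaussOne qr j| * B) := by
            apply mul_le_mul_of_nonneg_left _ hM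
            apply mul_le_mul_of_nonneg_right hgd3 hB.le
    have h3 : (|gaussOne qr (j+1)| * |(1 + α * gaussOne qr j) * (β - α * gaussOne qr j)|)
        * |gaussOne qr d - gaussOne qr j| ≤
        (3 * M * B) * |gaussOne qr d - gaussOne qr j| := by nlinarith [h2]
    exact le_of_mul_le_mul_right h3 hgdpos
  
  -- specialized bounds
  have hxq : |qr| = Q := rfl
  have hx2 : |qr^2| = Q^2 := by rw [abs_pow]
  have hx4 : |qr^4| = Q^4 := by rw [abs_pow]
  have hu2 : |1 + qr| ≤ 1 + Q := by
    calc |1 + qr| ≤ |(1:ℝ)| + |qr| := abs_add_le 1 qr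
      _ = 1 + Q := by rw [abs_one]
  have hu3 : |1 + qr + qr^2| ≤ 1 + Q + Q^2 := by
    calc |1 + qr + qr^2| ≤ |1 + qr| + |qr^2| := abs_add_le _ _
      _ ≤ 1 + Q + Q^2 := by rw [hx2]; linarith
  have hl2 : Q - 1 ≤ |1 + qr| := by
    have h := abs_sub_abs_le_abs_sub qr (-1)
    rw [abs_neg, abs_one, sub_neg_eq_add] at h
    calc Q - 1 ≤ |qr + 1| := h
      _ = |1 + qr| := by rw [add_comm]
  have hl3 : Q^2 - (1 + Q) ≤ |1 + qr + qr^2| := by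
    have h := abs_sub_abs_le_abs_sub (qr^2) (-(1 + qr))
    rw [abs_neg, sub_neg_eq_add, hx2] at h
    calc Q^2 - (1 + Q) ≤ Q^2 - |1 + qr| := by linarith
      _ ≤ |qr^2 + (1 + qr)| := h
      _ = |1 + qr + qr^2| := by ring_nf
  have hl4 : Q^3 - (1 + Q + Q^2) ≤ |1 + qr + qr^2 + qr^3| := by
    have h := abs_sub_abs_le_abs_sub (qr^3) (-(1 + qr + qr^2))
    rw [abs_neg, sub_neg_eq_add, abs_pow] at h
    calc Q^3 - (1 + Q + Q^2) ≤ Q^3 - |1 + qr + qr^2| := by linarith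
      _ ≤ |qr^3 + (1 + qr + qr^2)| := h
      _ = |1 + qr + qr^2 + qr^3| := by ring_nf
  -- the three P-bounds in explicit form
  have hP1 := hPb 1 (Or.inl rfl)
  have hP2 := hPb 2 (Or.inr (Or.inl rfl))
  have hP3 := hPb 3 (Or.inr (Or.inr rfl))
  simp only [show (1+1:ℕ)=2 by norm_num, show (2+1:ℕ)=3 by norm_num,
    show (3+1:ℕ)=4 by norm_num, gauss1, gauss2, gauss3, gauss4, mul_one] at hP1 hP2 hP3
  set m1 := |(1 + α) * (β - α)| with hm1
  set m2 := |(1 + α * (1 + qr)) * (β - α * (1 + qr))| with hm2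
  set m3 := |(1 + α * (1 + qr + qr^2)) * (β - α * (1 + qr + qr^2))| with hm3
  have hm1n : 0 ≤ m1 := abs_nonneg _
  have hm2n : 0 ≤ m2 := abs_nonneg _
  have hm3n : 0 ≤ m3 := abs_nonneg _
  have h1 : (Q - 1) * m1 ≤ 3 * M * B := by
    calc (Q - 1) * m1 ≤ |1 + qr| * m1 := mul_le_mul_of_nonneg_right hl2 hm1n
      _ ≤ 3 * M * B := hP1
  have h2 : (Q^2 - (1 + Q)) * m2 ≤ 3 * M * B := by
    calc (Q^2 - (1 + Q)) * m2 ≤ |1 + qr + qr^2| * m2 := mul_le_mul_of_nonneg_right hl3 hm2n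
      _ ≤ 3 * M * B := hP2
  have h3 : (Q^3 - (1 + Q + Q^2)) * m3 ≤ 3 * M * B := by
    calc (Q^3 - (1 + Q + Q^2)) * m3 ≤ |1 + qr + qr^2 + qr^3| * m3 :=
          mul_le_mul_of_nonneg_right hl4 hm3n
      _ ≤ 3 * M * B := hP3
  -- Lagrange interpolation identity and bound
  have lag : β * (qr^4 * (1 + qr)) =
      ((1 + α) * (β - α)) * ((1 + qr) * (1 + qr + qr^2) * qr^2)
      - ((1 + α * (1 + qr)) * (β - α * (1 + qr))) * ((1 + qr + qr^2) * qr * (1 + qr))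
      + ((1 + α * (1 + qr + qr^2)) * (β - α * (1 + qr + qr^2))) * ((1 + qr) * qr) := by
    ring
  have h4 : B * (Q^4 * (Q - 1)) ≤
      m1 * ((1 + Q) * ((1 + Q + Q^2) * Q^2)) + m2 * ((1 + Q + Q^2) * (Q * (1 + Q)))
      + m3 * ((1 + Q) * Q) := by
    have hLHS : B * (Q^4 * (Q - 1)) ≤ |β * (qr^4 * (1 + qr))| := by
      rw [abs_mul, abs_mul, hx4]
      have : Q^4 * (Q - 1) ≤ Q^4 * |1 + qr| :=
        mul_le_mul_of_nonneg_left hl2 (pow_nonneg hQ0.le 4)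
      exact mul_le_mul_of_nonneg_left this hB.le |>.trans_eq rfl
    rw [lag] at hLHS
    refine hLHS.trans ?_
    have t1 : |((1 + α) * (β - α)) * ((1 + qr) * (1 + qr + qr^2) * qr^2)| ≤
        m1 * ((1 + Q) * ((1 + Q + Q^2) * Q^2)) := by
      rw [abs_mul, hm1]
      apply mul_le_mul_of_nonneg_left _ hm1n
      rw [abs_mul, abs_mul, hx2, mul_assoc]
      have hb1 : |1 + qr| * (|1 + qr + qr^2| * Q^2) ≤ (1 + Q) * ((1 + Q + Q^2) * Q^2) := by
        apply mul_le_mul hu2 _ (by positivity) (by positivity)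
        exact mul_le_mul_of_nonneg_right hu3 (by positivity)
      exact hb1
    have t2 : |((1 + α * (1 + qr)) * (β - α * (1 + qr))) * ((1 + qr + qr^2) * qr * (1 + qr))| ≤
        m2 * ((1 + Q + Q^2) * (Q * (1 + Q))) := by
      rw [abs_mul, hm2]
      apply mul_le_mul_of_nonneg_left _ hm2n
      rw [abs_mul, abs_mul, mul_assoc]
      apply mul_le_mul hu3 _ (by positivity) (by positivity)
      rw [hxq]
      exact mul_le_mul_of_nonneg_left hu2 hQ0.le
    have t3 : |((1 + α * (1 + qr + qr^2)) * (β - α * (1 + qr + qr^2))) * ((1 + qr) * qr)| ≤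
        m3 * ((1 + Q) * Q) := by
      rw [abs_mul, hm3]
      apply mul_le_mul_of_nonneg_left _ hm3n
      rw [abs_mul, hxq]
      exact mul_le_mul_of_nonneg_right hu2 hQ0.le
    refine (abs_tri3 _ _ _).trans ?_
    linarith [t1, t2, t3]
  exact finalChain Q B M m1 m2 m3 hq hB hM hm1n hm2n hm3n h1 h2 h3 h4

/-- Under Assumption (DR), for a net of graphs with classical parameters
(`d ≥ 3`, `q ∈ ℤ`, `|q| ≥ 2`): `limsup |q| < ∞`; in particular `q` eventually takes
only finitely many values. -/
theorem stmt15 {Λ : Type*} [Preorder Λ] [IsDirected Λ (· ≤ ·)] [Nonempty Λ] [Infinite Λ]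
    (Γ : Λ → DRG) (t : Λ → ℝ)
    (hpi : ∀ l : Λ, (Γ l).piMem (t l))
    (hvar : ∀ l : Λ, 0 < sig2 Γ t l)
    (hd : Tendsto (fun l : Λ => (Γ l).d) atTop atTop)
    (q : Λ → ℤ) (αp βp : Λ → ℝ)
    (hd3 : ∀ l : Λ, 3 ≤ (Γ l).d)
    (hq2 : ∀ l : Λ, 2 ≤ |q l|)
    (hcp : ∀ l : Λ, (Γ l).HasClassical ((q l : ℤ) : ℝ) (αp l) (βp l))
    (ω αl : ℕ → ℝ) (hDR : AssumptionDR Γ t ω αl) :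
    (∃ C : ℤ, ∀ᶠ l in (atTop : Filter Λ), |q l| ≤ C) ∧
    (∃ S : Finset ℤ, ∀ᶠ l in (atTop : Filter Λ), q l ∈ S) := by
    classical
  obtain ⟨hω1pos, hω1, -⟩ := hDR 1 le_rfl
  obtain ⟨-, hω2, -⟩ := hDR 2 (by norm_num)
  obtain ⟨-, hω3, -⟩ := hDR 3 (by norm_num)
  obtain ⟨-, hω4, -⟩ := hDR 4 (by norm_num)
  have hω1ne : ω 1 ≠ 0 := ne_of_gt hω1pos
  have hr2 := hω2.div hω1 hω1ne
  have hr3 := hω3.div hω1 hω1ne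
  have hr4 := hω4.div hω1 hω1ne
  set M : ℝ := (ω 2 / ω 1 + 1) ⊔ ((ω 3 / ω 1 + 1) ⊔ (ω 4 / ω 1 + 1)) with hMdef
  have hM2 : ω 2 / ω 1 < M := lt_of_lt_of_le (lt_add_one _) le_sup_left
  have hM3 : ω 3 / ω 1 < M :=
    lt_of_lt_of_le (lt_add_one _) (le_trans le_sup_left le_sup_right)
  have hM4 : ω 4 / ω 1 < M :=
    lt_of_lt_of_le (lt_add_one _) (le_trans le_sup_right le_sup_right)
  have ev2 := hr2.eventually_lt_const hM2
  have ev3 := hr3.eventually_lt_const hM3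
  have ev4 := hr4.eventually_lt_const hM4
  have evd := hd.eventually_ge_atTop 5
  set C : ℤ := ⌈(108:ℝ) * M⌉ with hCdef
  have hbound : ∀ᶠ l in (atTop : Filter Λ), |q l| ≤ C := by
    filter_upwards [ev2, ev3, ev4, evd] with l hl2 hl3 hl4 hld
    set G := Γ l with hG
    set qr : ℝ := ((q l : ℤ) : ℝ) with hqr
    set α := αp l with hα
    set β := βp l with hβ
    obtain ⟨hbf, hcf⟩ := hcp l
    simp only [← hG, ← hqr, ← hα, ← hβ] at hbf hcf
    have hsig := hvar l
    have hsne : sig2 Γ t l ≠ 0 := ne_of_gt hsig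
    have hb0nn : (0:ℝ) ≤ (G.b 0 : ℝ) := Nat.cast_nonneg _
    have hb0ne : (G.b 0 : ℝ) ≠ 0 := by
      intro h
      rw [sig2] at hsig
      rw [← hG] at hsig
      rw [h] at hsig
      simp at hsig
    have hb0R : (0:ℝ) < (G.b 0 : ℝ) := lt_of_le_of_ne hb0nn (Ne.symm hb0ne)
    have hc1 : (G.c 1 : ℝ) = 1 := by
      rw [hcf 1 (by omega)]
      simp [gauss0, gauss1]
    have hb0eq : (G.b 0 : ℝ) = gaussOne qr G.d * β := by
      rw [hbf 0 (Nat.zero_le _), gauss0]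
      ring
    have hgdβ : 0 < gaussOne qr G.d * β := hb0eq ▸ hb0R
    have hratio : ∀ j : ℕ, omegaBar Γ t j l / omegaBar Γ t 1 l =
        (G.c j : ℝ) * (G.b (j-1) : ℝ) / (G.b 0 : ℝ) := by
      intro j
      simp only [omegaBar, ← hG]
      norm_num [hc1]
      field_simp
    have hqabs : (2:ℝ) ≤ |qr| := by
      have := hq2 l
      rw [hqr]
      exact_mod_cast this
    have hcb : ∀ j : ℕ, j = 1 ∨ j = 2 ∨ j = 3 →
        0 ≤ gaussOne qr (j+1) * (gaussOne qr G.d - gaussOne qr j) *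
            ((1 + α * gaussOne qr j) * (β - α * gaussOne qr j)) ∧
        gaussOne qr (j+1) * (gaussOne qr G.d - gaussOne qr j) *
            ((1 + α * gaussOne qr j) * (β - α * gaussOne qr j)) ≤
          M * (gaussOne qr G.d * β) := by
      intro j hj
      have hjd : j + 1 ≤ G.d := by rcases hj with rfl | rfl | rfl <;> omega
      have hceq : (G.c (j+1) : ℝ) = gaussOne qr (j+1) * (1 + α * gaussOne qr j) := by
        rw [hcf (j+1) hjd]
        norm_num
      have hbeq : (G.b j : ℝ) = (gaussOne qr G.d - gaussOne qr j) * (β - α * gaussOne qr j) :=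
        hbf j (by omega)
      have hexpr : gaussOne qr (j+1) * (gaussOne qr G.d - gaussOne qr j) *
          ((1 + α * gaussOne qr j) * (β - α * gaussOne qr j)) =
          (G.c (j+1) : ℝ) * (G.b j : ℝ) := by
        rw [hceq, hbeq]; ring
      constructor
      · rw [hexpr]; positivity
      · rw [hexpr, ← hb0eq]
        have hlt : (G.c (j+1) : ℝ) * (G.b ((j+1)-1) : ℝ) / (G.b 0 : ℝ) < M := by
          rw [← hratio (j+1)]
          rcases hj with rfl | rfl | rfl
          · exact hl2
          · exact hl3
          · exact hl4
        have : (G.c (j+1) : ℝ) * (G.b j : ℝ) / (G.b 0 : ℝ) < M := by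
          simpa using hlt
        calc (G.c (j+1) : ℝ) * (G.b j : ℝ)
            = ((G.c (j+1) : ℝ) * (G.b j : ℝ) / (G.b 0 : ℝ)) * (G.b 0 : ℝ) := by
              field_simp
          _ ≤ M * (G.b 0 : ℝ) :=
              mul_le_mul_of_nonneg_right this.le hb0nn
    have hkey := keyIneq qr α β M G.d hld hqabs hgdβ hcb
    have h1 : |(q l : ℝ)| ≤ (C : ℝ) := by
      calc |(q l : ℝ)| = |qr| := by rw [hqr]
        _ ≤ 108 * M := hkey
        _ ≤ (C : ℝ) := Int.le_ceil _
    have h2 : ((|q l| : ℤ) : ℝ) ≤ ((C : ℤ) : ℝ) := by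
      rw [Int.cast_abs]
      exact h1
    exact_mod_cast h2
  refine ⟨⟨C, hbound⟩, ⟨Finset.Icc (-C) C, ?_⟩⟩
  filter_upwards [hbound] with l hl
  rw [Finset.mem_Icc]
  constructor <;> [linarith [neg_abs_le (q l)]; linarith [le_abs_self (q l)]]
end

section
/- Let d ≥ 1 be an integer, let q ∈ ℝ \ {0}, and let α, β ∈ ℝ. Define b_h = ([d]_q − [h]_q)(β − α[h]_q) and c_h = [h]_q(1 + α[h−1]_q), where [h]_q = 1 + q + ⋯ + q^{h−1}. Then for every 0 ≤ i ≤ d such that c_1 c_2 ⋯ c_i ≠ 0, the quotient k_i = (b_0 b_1 ⋯ b_{i−1})/(c_1 c_2 ⋯ c_i) satisfies k_i = [(q^{−d}; q)_i · (α−β+βq; α; q)_i · q^{d·i}] / [(α+1−q; α; q)_i · (q; q)_i], provided (α+1−q; α; q)_i · (q; q)_i ≠ 0, where (x; q)_h = ∏_{j=0}^{h−1}(1 − x q^j) and (x; y; q)_h = ∏_{j=0}^{h−1}(x − y q^j). -/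
/-- The q-shifted factorial `(x; q)_n = (1−x)(1−xq)⋯(1−xq^{n−1})`. -/
noncomputable def qPoch (x q : ℝ) (n : ℕ) : ℝ := ∏ j ∈ Finset.range n, (1 - x * q ^ j)

/-- The two-parameter product `(x; y; q)_n = (x−y)(x−yq)⋯(x−yq^{n−1})`. -/
noncomputable def qPoch2 (x y q : ℝ) (n : ℕ) : ℝ := ∏ j ∈ Finset.range n, (x - y * q ^ j)

/-- Closed formula for `k_i = (b₀⋯b_{i−1})/(c₁⋯c_i)` in terms of the classical
parameters `(d, q, α, β)`:
`k_i = (q^{−d}; q)_i (α−β+βq; α; q)_i q^{d·i} / [(α+1−q; α; q)_i (q; q)_i]`. -/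
theorem stmt19 (d : ℕ) (hd : 1 ≤ d) (q : ℝ) (hq : q ≠ 0) (α β : ℝ)
    (b c : ℕ → ℝ)
    (hb : ∀ h : ℕ, b h = (gaussOne q d - gaussOne q h) * (β - α * gaussOne q h))
    (hc : ∀ h : ℕ, c h = gaussOne q h * (1 + α * gaussOne q (h - 1)))
    (i : ℕ) (hi : i ≤ d)
    (hcprod : (∏ h ∈ Finset.range i, c (h + 1)) ≠ 0)
    (hden : qPoch2 (α + 1 - q) α q i * qPoch q q i ≠ 0) :
    (∏ h ∈ Finset.range i, b h) / (∏ h ∈ Finset.range i, c (h + 1)) =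
      qPoch ((q ^ d)⁻¹) q i * qPoch2 (α - β + β * q) α q i * q ^ (d * i) /
        (qPoch2 (α + 1 - q) α q i * qPoch q q i) := by
  rcases Nat.eq_zero_or_pos i with rfl | hipos
  · simp [qPoch, qPoch2]
  have hq1 : q ≠ 1 := by
    rintro rfl
    apply hden
    have h0 : qPoch 1 1 i = 0 := by
      unfold qPoch
      exact Finset.prod_eq_zero (Finset.mem_range.2 hipos) (by norm_num)
    rw [h0, mul_zero]
  have hqm1 : q - 1 ≠ 0 := sub_ne_zero.2 hq1
  have g : ∀ m : ℕ, gaussOne q m = (q ^ m - 1) / (q - 1) := fun m => geom_sum_eq hq1 m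
  set t : ℝ := (q - 1) ^ 2 with ht
  have htne : t ≠ 0 := pow_ne_zero _ hqm1
  set A : ℝ := α - β + β * q with hA
  have hqd : (q : ℝ) ^ d ≠ 0 := pow_ne_zero _ hq
  have hb2 : ∀ h : ℕ, b h * t = (q ^ d * (1 - (q ^ d)⁻¹ * q ^ h)) * (A - α * q ^ h) := by
    intro h
    rw [hb, g, g, ht, hA]
    field_simp
    ring
  have hc2 : ∀ h : ℕ, c (h + 1) * t = (1 - q * q ^ h) * ((α + 1 - q) - α * q ^ h) := by
    intro h
    rw [hc]
    simp only [Nat.add_sub_cancel]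
    rw [g, g, ht]
    field_simp
    ring
  have Pb : (∏ h ∈ Finset.range i, b h) * t ^ i
      = qPoch ((q ^ d)⁻¹) q i * q ^ (d * i) * qPoch2 A α q i := by
    calc (∏ h ∈ Finset.range i, b h) * t ^ i
        = ∏ h ∈ Finset.range i, (b h * t) := by
          rw [Finset.prod_mul_distrib, Finset.prod_const, Finset.card_range]
      _ = ∏ h ∈ Finset.range i, ((q ^ d * (1 - (q ^ d)⁻¹ * q ^ h)) * (A - α * q ^ h)) :=
          Finset.prod_congr rfl fun h _ => hb2 h
      _ = _ := by
          rw [Finset.prod_mul_distrib, Finset.prod_mul_distrib, Finset.prod_const,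
            Finset.card_range, ← pow_mul]
          unfold qPoch qPoch2
          ring
  have Pc : (∏ h ∈ Finset.range i, c (h + 1)) * t ^ i
      = qPoch2 (α + 1 - q) α q i * qPoch q q i := by
    calc (∏ h ∈ Finset.range i, c (h + 1)) * t ^ i
        = ∏ h ∈ Finset.range i, (c (h + 1) * t) := by
          rw [Finset.prod_mul_distrib, Finset.prod_const, Finset.card_range]
      _ = ∏ h ∈ Finset.range i, ((1 - q * q ^ h) * ((α + 1 - q) - α * q ^ h)) :=
          Finset.prod_congr rfl fun h _ => hc2 h
      _ = _ := by
          rw [Finset.prod_mul_distrib]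
          unfold qPoch qPoch2
          ring
  rw [div_eq_div_iff hcprod hden]
  apply mul_right_cancel₀ (pow_ne_zero i htne)
  linear_combination (qPoch2 (α + 1 - q) α q i * qPoch q q i) * Pb
    - (qPoch ((q ^ d)⁻¹) q i * qPoch2 A α q i * q ^ (d * i)) * Pc
end
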